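/- arXiv:math/0312370 — 13 statements merged into one kernel-verified Lean document; each statement's English description precedes it below -/
import Mathlib

section
/- Let V be a finite-dimensional vector space over a field K, let A be a linear endomorphism of V, and let y ∈ V and η ∈ V* be nonzero. Then rank(A - y⊗η) < rank(A) if and only if y ∈ im A, ker η ⊇ ker A, and ⟨x, η⟩ = 1 for some x with Ax = y. -/
/-- Rank reduction lemma for rank-one perturbations (Lemma 2.1). -/
theorem stmt0 {K V : Type*} [Field K] [AddCommGroup V] [Module K V]
    [FiniteDimensional K V] (A : V →ₗ[K] V) (y : V) (η : Module.Dual K V)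
    (hy : y ≠ 0) (hη : η ≠ 0) :
    Module.finrank K (LinearMap.range (A - η.smulRight y)) <
        Module.finrank K (LinearMap.range A) ↔
      y ∈ LinearMap.range A ∧ LinearMap.ker A ≤ LinearMap.ker η ∧
        ∃ x, A x = y ∧ η x = 1 := by
  set B := A - η.smulRight y with hBdef
  have hBx : ∀ x, B x = A x - η x • y := fun x => by
    simp [hBdef, LinearMap.sub_apply, LinearMap.smulRight_apply]
  have hAx : ∀ x, A x = B x + η x • y := fun x => by rw [hBx]; abel
  constructor
  · intro hlt
    have ha : y ∉ LinearMap.range B := by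
      intro hyB
      have hle : LinearMap.range A ≤ LinearMap.range B := by
        rintro _ ⟨x, rfl⟩
        rw [hAx x]
        exact add_mem (LinearMap.mem_range_self B x) (Submodule.smul_mem _ _ hyB)
      exact absurd (Submodule.finrank_mono hle) (not_le.mpr hlt)
    have hyA : y ∈ LinearMap.range A := by
      by_contra hyA
      have hker : LinearMap.ker B ≤ LinearMap.ker A := by
        intro x hx
        have hx0 : B x = 0 := hx
        have hx' : A x = η x • y := by
          have h := hBx x
          rw [hx0] at h
          exact (sub_eq_zero.mp h.symm)
        by_cases h0 : η x = 0
        · simp [LinearMap.mem_ker, hx', h0]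
        · exact absurd ⟨(η x)⁻¹ • x, by
            rw [map_smul, hx', smul_smul, inv_mul_cancel₀ h0, one_smul]⟩ hyA
      have h1 := LinearMap.finrank_range_add_finrank_ker A
      have h2 := LinearMap.finrank_range_add_finrank_ker B
      have h3 := Submodule.finrank_mono hker
      omega
    refine ⟨hyA, ?_, ?_⟩
    · intro z hz
      by_contra h0
      have h0' : η z ≠ 0 := fun h => h0 (LinearMap.mem_ker.mpr h)
      apply ha
      refine ⟨(-(η z)⁻¹) • z, ?_⟩
      have hz0 : A z = 0 := hz
      simp [map_smul, hBx, hz0, smul_smul, inv_mul_cancel₀ h0']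
    · obtain ⟨x₀, hx₀⟩ := hyA
      refine ⟨x₀, hx₀, ?_⟩
      by_contra hne
      apply ha
      have hB0 : B x₀ = (1 - η x₀) • y := by
        rw [hBx, hx₀, sub_smul, one_smul]
      have hc : (1 : K) - η x₀ ≠ 0 := sub_ne_zero.mpr (Ne.symm hne)
      refine ⟨(1 - η x₀)⁻¹ • x₀, ?_⟩
      rw [map_smul, hB0, smul_smul, inv_mul_cancel₀ hc, one_smul]
  · rintro ⟨hyA, hker, x₀, hx₀, hηx₀⟩
    have hle : LinearMap.range B ≤ LinearMap.range A := by
      rintro _ ⟨x, rfl⟩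
      rw [hBx x]
      exact sub_mem (LinearMap.mem_range_self A x) (Submodule.smul_mem _ _ hyA)
    have hnB : y ∉ LinearMap.range B := by
      rintro ⟨x, hx⟩
      have hAx' : A x = (1 + η x) • y := by
        rw [hAx x, hx, add_smul, one_smul]
      have hkerx : x - (1 + η x) • x₀ ∈ LinearMap.ker A := by
        rw [LinearMap.mem_ker, map_sub, map_smul, hx₀, hAx', sub_self]
      have := hker hkerx
      rw [LinearMap.mem_ker, map_sub, map_smul, hηx₀, smul_eq_mul, mul_one] at this
      exact one_ne_zero (α := K) (by linear_combination -this)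
    have hlt : LinearMap.range B < LinearMap.range A :=
      lt_of_le_of_ne hle (fun h => hnB (h ▸ hyA))
    exact Submodule.finrank_lt_finrank_of_lt hlt
end

section
/- Let V be a finite-dimensional vector space over a field of characteristic 0 and let A be a nonzero endomorphism of V with trace zero. Then there exists a rank-one endomorphism J of V with trace zero such that rank(A - J) = rank(A) - 1. -/
open Module LinearMap Submodule

section aux

variable {K V : Type*} [Field K] [CharZero K] [AddCommGroup V] [Module K V]
    [FiniteDimensional K V]

/-- Key existence: a vector outside `ker A ⊔ span {A v}`. -/
lemma exists_good_vector (A : V →ₗ[K] V) (hA : A ≠ 0)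
    (htr : LinearMap.trace K V A = 0) :
    ∃ v : V, A v ≠ 0 ∧ v ∉ (LinearMap.ker A ⊔ K ∙ (A v)) := by
  by_contra H
  push_neg at H
  -- every x with A x ≠ 0 gives A (A x) = μ • A x with μ ≠ 0
  have step1 : ∀ x : V, A x ≠ 0 → ∃ μ : K, μ ≠ 0 ∧ A (A x) = μ • A x := by
    intro x hx
    obtain ⟨k, hk, z, hz, hkz⟩ := Submodule.mem_sup.mp (H x hx)
    obtain ⟨c, rfl⟩ := Submodule.mem_span_singleton.mp hz
    have hk' : A k = 0 := hk
    have h1 : A x = c • A (A x) := by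
      conv_lhs => rw [← hkz]
      simp [hk']
    have hc : c ≠ 0 := by rintro rfl; rw [zero_smul] at h1; exact hx h1
    refine ⟨c⁻¹, inv_ne_zero hc, ?_⟩
    conv_rhs => rw [h1]
    rw [smul_smul, inv_mul_cancel₀ hc, one_smul]
  -- eigenvalues agree
  have step2 : ∀ x y : V, ∀ μ ν : K, A x ≠ 0 → A y ≠ 0 →
      A (A x) = μ • A x → A (A y) = ν • A y → μ = ν := by
    intro x y μ ν hx hy hμ hν
    by_cases hsum : A x + A y = 0
    · have hAy : A y = -(A x) := by
        rw [eq_neg_iff_add_eq_zero, add_comm]; exact hsum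
      have h2 : ν • A y = μ • A y := by
        rw [← hν, hAy, map_neg, hμ, smul_neg]
      exact smul_left_injective K hy h2.symm
    · obtain ⟨ρ, hρ0, hρ⟩ := step1 (x + y) (by rw [map_add]; exact hsum)
      rw [map_add, map_add, hμ, hν, smul_add] at hρ
      have hkey : (μ - ρ) • A x = (ρ - ν) • A y := by
        linear_combination (norm := module) hρ
      by_cases hμρ : μ = ρ
      · subst hμρ
        rw [sub_self, zero_smul] at hkey
        rcases smul_eq_zero.mp hkey.symm with h | h
        · rw [sub_eq_zero] at h; exact h
        · exact absurd h hy
      · have hne : μ - ρ ≠ 0 := sub_ne_zero.mpr hμρ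
        have hAx : A x = ((μ - ρ)⁻¹ * (ρ - ν)) • A y := by
          rw [mul_smul, ← hkey, smul_smul, inv_mul_cancel₀ hne, one_smul]
        set t := (μ - ρ)⁻¹ * (ρ - ν) with ht
        have htne : t ≠ 0 := by
          rintro h0; rw [h0, zero_smul] at hAx; exact hx hAx
        have e1 : A (A x) = (t * μ) • A y := by
          rw [hμ, hAx, smul_smul, mul_comm]
        have e2 : A (A x) = (t * ν) • A y := by
          conv_lhs => rw [hAx]
          rw [map_smul, hν, smul_smul]
        have h3 := smul_left_injective K hy (e1.symm.trans e2)
        exact mul_left_cancel₀ htne h3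
  -- fix a global eigenvalue μ
  obtain ⟨x₀, hx₀⟩ : ∃ x : V, A x ≠ 0 := by
    by_contra h; push_neg at h
    exact hA (LinearMap.ext fun x => h x)
  obtain ⟨μ, hμ0, hμ⟩ := step1 x₀ hx₀
  have step3 : ∀ y : V, A (A y) = μ • A y := by
    intro y
    by_cases hy : A y = 0
    · rw [hy, map_zero, smul_zero]
    · obtain ⟨ν, hν0, hν⟩ := step1 y hy
      rw [hν, step2 x₀ y μ ν hx₀ hy hμ hν]
  -- B := μ⁻¹ • A is a projection with trace 0
  set B : V →ₗ[K] V := μ⁻¹ • A with hB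
  have hBB : ∀ x, B (B x) = B x := by
    intro x
    simp only [hB, LinearMap.smul_apply, map_smul, step3, smul_smul]
    rw [inv_mul_cancel₀ hμ0, mul_one]
  have hproj : LinearMap.IsProj (LinearMap.range B) B := by
    constructor
    · intro x; exact LinearMap.mem_range_self B x
    · rintro x ⟨y, rfl⟩; exact hBB y
  have htrB : LinearMap.trace K V B = 0 := by
    rw [hB, map_smul, htr, smul_zero]
  have hrank : (Module.finrank K (LinearMap.range B) : K) = 0 := by
    rw [← hproj.trace, htrB]
  have hr0 : Module.finrank K (LinearMap.range B) = 0 := by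
    exact_mod_cast hrank
  have hbot : LinearMap.range B = ⊥ := Submodule.finrank_eq_zero.mp hr0
  have hB0 : B = 0 := LinearMap.range_eq_bot.mp hbot
  apply hA
  have : A = μ • B := by
    rw [hB, smul_smul, mul_inv_cancel₀ hμ0, one_smul]
  rw [this, hB0, smul_zero]

end aux

/-- Rank reduction for traceless endomorphisms in characteristic zero. -/
theorem stmt1 {K V : Type*} [Field K] [CharZero K] [AddCommGroup V] [Module K V]
    [FiniteDimensional K V] (A : V →ₗ[K] V) (hA : A ≠ 0)
    (htr : LinearMap.trace K V A = 0) :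
    ∃ J : V →ₗ[K] V, Module.finrank K (LinearMap.range J) = 1 ∧
      LinearMap.trace K V J = 0 ∧
      Module.finrank K (LinearMap.range (A - J)) =
        Module.finrank K (LinearMap.range A) - 1 := by
  obtain ⟨v, hv, hvp⟩ := exists_good_vector A hA htr
  -- functional vanishing on ker A ⊔ span {A v} with φ v = 1
  obtain ⟨f, hf, hfmap⟩ :=
    Submodule.exists_dual_map_eq_bot_of_notMem hvp inferInstance
  set p := LinearMap.ker A ⊔ K ∙ (A v) with hp
  set φ : Module.Dual K V := (f v)⁻¹ • f with hφ
  have hφv : φ v = 1 := by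
    simp [hφ, inv_mul_cancel₀ hf]
  have hφp : ∀ x ∈ p, φ x = 0 := by
    intro x hx
    have : f x ∈ p.map f := Submodule.mem_map_of_mem hx
    rw [hfmap] at this
    simp only [Submodule.mem_bot] at this
    simp [hφ, this]
  have hφker : ∀ x, A x = 0 → φ x = 0 := fun x hx =>
    hφp x (Submodule.mem_sup_left hx)
  have hφAv : φ (A v) = 0 :=
    hφp _ (Submodule.mem_sup_right (Submodule.mem_span_singleton_self _))
  -- define J
  set J : V →ₗ[K] V := dualTensorHom K V V (φ ⊗ₜ[K] A v) with hJ
  have hJapp : ∀ x, J x = φ x • A v := fun x => rfl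
  refine ⟨J, ?_, ?_, ?_⟩
  · -- rank J = 1
    have hrange : LinearMap.range J = K ∙ (A v) := by
      apply le_antisymm
      · rintro _ ⟨x, rfl⟩
        exact Submodule.mem_span_singleton.mpr ⟨φ x, rfl⟩
      · rw [Submodule.span_singleton_le_iff_mem]
        exact ⟨v, by rw [hJapp, hφv, one_smul]⟩
    rw [hrange]
    exact finrank_span_singleton hv
  · -- trace J = 0
    rw [hJ, LinearMap.trace_eq_contract_apply, contractLeft_apply, hφAv]
  · -- rank (A - J) = rank A - 1
    have hkerle : LinearMap.ker A ⊔ (K ∙ v) ≤ LinearMap.ker (A - J) := by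
      rw [sup_le_iff]
      constructor
      · intro x hx
        have hx' : A x = 0 := hx
        simp only [LinearMap.mem_ker, LinearMap.sub_apply, hJapp, hx',
          hφker x hx', zero_smul, sub_zero]
      · rw [Submodule.span_singleton_le_iff_mem]
        simp only [LinearMap.mem_ker, LinearMap.sub_apply, hJapp, hφv, one_smul,
          sub_self]
    have hdisj : LinearMap.ker A ⊓ (K ∙ v) = ⊥ := by
      rw [Submodule.eq_bot_iff]
      rintro x ⟨hx1, hx2⟩
      obtain ⟨c, rfl⟩ := Submodule.mem_span_singleton.mp hx2
      have : c • A v = 0 := by rw [← map_smul]; exact hx1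
      rcases smul_eq_zero.mp this with h | h
      · rw [h, zero_smul]
      · exact absurd h hv
    have hsupdim : Module.finrank K ↥(LinearMap.ker A ⊔ (K ∙ v)) =
        Module.finrank K (LinearMap.ker A) + 1 := by
      have := Submodule.finrank_sup_add_finrank_inf_eq (LinearMap.ker A) (K ∙ v)
      rw [hdisj, finrank_bot, add_zero, finrank_span_singleton] at this
      · exact this
      · rintro rfl; exact hv (map_zero A)
    have hker_ge : Module.finrank K (LinearMap.ker A) + 1 ≤
        Module.finrank K (LinearMap.ker (A - J)) := by
      rw [← hsupdim]
      exact Submodule.finrank_mono hkerle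
    -- rank-nullity for A and A - J
    have hrnA := LinearMap.finrank_range_add_finrank_ker A
    have hrnAJ := LinearMap.finrank_range_add_finrank_ker (A - J)
    -- subadditivity: rank A ≤ rank (A - J) + rank J
    have hrangeJ : Module.finrank K (LinearMap.range J) = 1 := by
      have hrange : LinearMap.range J = K ∙ (A v) := by
        apply le_antisymm
        · rintro _ ⟨x, rfl⟩
          exact Submodule.mem_span_singleton.mpr ⟨φ x, rfl⟩
        · rw [Submodule.span_singleton_le_iff_mem]
          exact ⟨v, by rw [hJapp, hφv, one_smul]⟩
      rw [hrange]; exact finrank_span_singleton hv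
    have hsub : Module.finrank K (LinearMap.range A) ≤
        Module.finrank K (LinearMap.range (A - J)) + 1 := by
      have h1 : LinearMap.range A ≤ LinearMap.range (A - J) ⊔ LinearMap.range J := by
        rintro _ ⟨x, rfl⟩
        have : A x = (A - J) x + J x := by simp
        rw [this]
        exact Submodule.add_mem_sup (LinearMap.mem_range_self _ x)
          (LinearMap.mem_range_self _ x)
      calc Module.finrank K (LinearMap.range A)
          ≤ Module.finrank K ↥(LinearMap.range (A - J) ⊔ LinearMap.range J) :=
            Submodule.finrank_mono h1
        _ ≤ Module.finrank K (LinearMap.range (A - J)) +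
            Module.finrank K (LinearMap.range J) := by
            have h2 := Submodule.finrank_sup_add_finrank_inf_eq
              (LinearMap.range (A - J)) (LinearMap.range J)
            omega
        _ = Module.finrank K (LinearMap.range (A - J)) + 1 := by rw [hrangeJ]
    omega
end

section
/- Every traceless n×n matrix of rank k over an algebraically closed field of characteristic 0 (with 1 ≤ k ≤ n) can be written as a sum of k traceless matrices of rank 1. -/
open Matrix Module Submodule

section Aux

variable {K : Type*} [Field K] [CharZero K] {n : ℕ}

private lemma trace_mulVecLin' (A : Matrix (Fin n) (Fin n) K) :
    LinearMap.trace K (Fin n → K) A.mulVecLin = A.trace := by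
  rw [LinearMap.trace_eq_matrix_trace K (Pi.basisFun K (Fin n)),
    LinearMap.toMatrix_eq_toMatrix', ← Matrix.toLin'_apply', LinearMap.toMatrix'_toLin']

private lemma rank_add_le' (A B : Matrix (Fin n) (Fin n) K) :
    (A + B).rank ≤ A.rank + B.rank := by
  have hle : LinearMap.range (A + B).mulVecLin ≤
      LinearMap.range A.mulVecLin ⊔ LinearMap.range B.mulVecLin := by
    rintro _ ⟨x, rfl⟩
    rw [Matrix.mulVecLin_apply, Matrix.add_mulVec]
    exact Submodule.add_mem_sup ⟨x, rfl⟩ ⟨x, rfl⟩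
  calc (A + B).rank ≤ finrank K ↥(LinearMap.range A.mulVecLin ⊔ LinearMap.range B.mulVecLin) :=
        Submodule.finrank_mono hle
    _ ≤ A.rank + B.rank := by
        have := Submodule.finrank_sup_add_finrank_inf_eq
          (LinearMap.range A.mulVecLin) (LinearMap.range B.mulVecLin)
        unfold Matrix.rank
        omega

/-- Key lemma: a traceless matrix of positive rank has a vector `v` with
`A v ≠ 0` and `v ∉ ker A ⊔ span {A v}`. -/
private lemma exists_good_v (A : Matrix (Fin n) (Fin n) K)
    (htr : A.trace = 0) (hrk : 1 ≤ A.rank) :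
    ∃ v : Fin n → K, A.mulVec v ≠ 0 ∧
      v ∉ LinearMap.ker A.mulVecLin ⊔ (K ∙ A.mulVec v) := by
  by_contra hcon
  push_neg at hcon
  -- every nonzero element of range is an eigenvector with nonzero eigenvalue
  have key : ∀ w ∈ LinearMap.range A.mulVecLin, w ≠ 0 →
      ∃ c : K, c ≠ 0 ∧ A.mulVec w = c • w := by
    rintro _ ⟨v, rfl⟩ hw
    rw [Matrix.mulVecLin_apply] at hw ⊢
    have hv := hcon v hw
    rw [Submodule.mem_sup] at hv
    obtain ⟨u, hu, z, hz, hsum⟩ := hv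
    obtain ⟨μ, rfl⟩ := Submodule.mem_span_singleton.mp hz
    rw [LinearMap.mem_ker, Matrix.mulVecLin_apply] at hu
    have heq : A.mulVec v = μ • A.mulVec (A.mulVec v) := by
      conv_lhs => rw [← hsum]
      rw [Matrix.mulVec_add, hu, Matrix.mulVec_smul, zero_add]
    have hμ : μ ≠ 0 := by
      rintro rfl
      rw [zero_smul] at heq
      exact hw heq
    refine ⟨μ⁻¹, inv_ne_zero hμ, ?_⟩
    rw [heq, Matrix.mulVec_smul, smul_smul, inv_mul_cancel₀ hμ, one_smul,
      ← Matrix.mulVec_smul, ← heq]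
  -- get a nonzero element of the range
  have hne : LinearMap.range A.mulVecLin ≠ ⊥ := by
    intro h
    rw [Matrix.rank, h, finrank_bot] at hrk
    omega
  obtain ⟨w₀, hw₀mem, hw₀⟩ := Submodule.exists_mem_ne_zero_of_ne_bot hne
  obtain ⟨c₀, hc₀, hw₀eig⟩ := key w₀ hw₀mem hw₀
  -- the eigenvalue is the same everywhere on the range
  have uniform : ∀ w ∈ LinearMap.range A.mulVecLin, A.mulVec w = c₀ • w := by
    intro w hw
    by_cases hwz : w = 0
    · simp [hwz]
    obtain ⟨c, hc, heig⟩ := key w hw hwz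
    suffices hcc : c = c₀ by rw [heig, hcc]
    by_contra hne'
    by_cases hsum0 : w + w₀ = 0
    · have hww : w = -w₀ := eq_neg_of_add_eq_zero_left hsum0
      rw [hww, Matrix.mulVec_neg, hw₀eig, smul_neg, neg_inj] at heig
      have h0 : (c₀ - c) • w₀ = 0 := by rw [sub_smul, heig, sub_self]
      rcases smul_eq_zero.mp h0 with h | h
      · exact hne' (sub_eq_zero.mp h).symm
      · exact hw₀ h
    · have hmem : w + w₀ ∈ LinearMap.range A.mulVecLin := add_mem hw hw₀mem
      obtain ⟨c₃, hc₃, heig₃⟩ := key _ hmem hsum0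
      rw [Matrix.mulVec_add, heig, hw₀eig] at heig₃
      -- c • w + c₀ • w₀ = c₃ • (w + w₀)
      set x : Fin n → K := (c₃ - c) • w with hx
      have hx2 : x = (c₀ - c₃) • w₀ := by
        rw [hx]
        linear_combination (norm := module) -heig₃
      have hAx1 : A.mulVec x = c • x := by
        rw [hx, Matrix.mulVec_smul, heig, smul_smul, smul_smul, mul_comm]
      have hAx2 : A.mulVec x = c₀ • x := by
        rw [hx2, Matrix.mulVec_smul, hw₀eig, smul_smul, smul_smul, mul_comm]
      have hxz : x = 0 := by
        have : (c - c₀) • x = 0 := by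
          rw [sub_smul, ← hAx1, ← hAx2, sub_self]
        rcases smul_eq_zero.mp this with h | h
        · exact absurd (sub_eq_zero.mp h) hne'
        · exact h
      have h1 : c₃ = c := by
        have := hxz
        rw [hx] at this
        rcases smul_eq_zero.mp this with h | h
        · exact sub_eq_zero.mp h
        · exact absurd h hwz
      have h2 : c₀ = c₃ := by
        have := hxz
        rw [hx2] at this
        rcases smul_eq_zero.mp this with h | h
        · exact sub_eq_zero.mp h
        · exact absurd h hw₀
      exact hne' (by rw [← h1, ← h2])
  -- c₀⁻¹ • A.mulVecLin is a projection onto the range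
  have hproj : LinearMap.IsProj (LinearMap.range A.mulVecLin) (c₀⁻¹ • A.mulVecLin) := by
    constructor
    · intro x
      rw [LinearMap.smul_apply]
      exact Submodule.smul_mem _ _ (LinearMap.mem_range_self _ x)
    · intro x hx
      rw [LinearMap.smul_apply, Matrix.mulVecLin_apply, uniform x hx, smul_smul,
        inv_mul_cancel₀ hc₀, one_smul]
  have htrace := hproj.trace
  rw [_root_.map_smul, trace_mulVecLin', htr, smul_zero] at htrace
  have h0 : A.rank = 0 := by
    have hcast : ((A.rank : K)) = 0 := by rw [Matrix.rank]; exact htrace.symm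
    exact_mod_cast hcast
  omega

end Aux

section Step

variable {K : Type*} [Field K] [CharZero K] {n : ℕ}

/-- Peel off one traceless rank-one matrix. -/
private lemma step {m : ℕ} (A : Matrix (Fin n) (Fin n) K)
    (htr : A.trace = 0) (hrk : A.rank = m + 1) :
    ∃ R B : Matrix (Fin n) (Fin n) K, R.rank = 1 ∧ R.trace = 0 ∧
      B.trace = 0 ∧ B.rank = m ∧ A = R + B := by
  obtain ⟨v, hAv, hvnot⟩ := exists_good_v A htr (by omega)
  set U := LinearMap.ker A.mulVecLin ⊔ (K ∙ A.mulVec v) with hU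
  have hq : U.mkQ v ≠ 0 := by
    rw [Submodule.mkQ_apply, ne_eq, Submodule.Quotient.mk_eq_zero]; exact hvnot
  obtain ⟨ψ, hψ⟩ : ∃ ψ : Module.Dual K ((Fin n → K) ⧸ U), ψ (U.mkQ v) ≠ 0 := by
    by_contra hall
    push_neg at hall
    exact hq ((Module.forall_dual_apply_eq_zero_iff K _).mp hall)
  set φ : (Fin n → K) →ₗ[K] K := (ψ (U.mkQ v))⁻¹ • (ψ ∘ₗ U.mkQ) with hφ
  have hφv : φ v = 1 := by
    simp only [hφ, LinearMap.smul_apply, LinearMap.comp_apply, smul_eq_mul]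
    exact inv_mul_cancel₀ hψ
  have hφU : ∀ u ∈ U, φ u = 0 := by
    intro u hu
    have : U.mkQ u = 0 := by
      rw [Submodule.mkQ_apply, Submodule.Quotient.mk_eq_zero]; exact hu
    simp [hφ, this]
  set R := Matrix.vecMulVec (A.mulVec v) (fun j => φ (Pi.single j 1)) with hR
  have hsing : ∀ j : Fin n, (fun k => if j = k then (1:K) else 0) = Pi.single j 1 := by
    intro j; funext kk; simp [Pi.single_apply, eq_comm]
  have hRx : ∀ x, R.mulVec x = φ x • A.mulVec v := by
    intro x
    funext i
    simp only [hR, Matrix.mulVec, dotProduct, Matrix.vecMulVec_apply, Pi.smul_apply,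
      smul_eq_mul, LinearMap.pi_apply_eq_sum_univ φ x, Finset.sum_mul]
    apply Finset.sum_congr rfl
    intro j _
    rw [hsing j, ← Finset.sum_mul, ← Finset.sum_mul]
    ring
  have hRv : R.mulVec v = A.mulVec v := by rw [hRx, hφv, one_smul]
  have hφAv : φ (A.mulVec v) = 0 :=
    hφU _ (Submodule.mem_sup_right (Submodule.mem_span_singleton_self _))
  have hRtr : R.trace = 0 := by
    rw [Matrix.trace, ← hφAv, LinearMap.pi_apply_eq_sum_univ φ (A.mulVec v)]
    apply Finset.sum_congr rfl
    intro i _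
    simp only [Matrix.diag_apply, hR, Matrix.vecMulVec_apply, smul_eq_mul, hsing i]
  have hRrk : R.rank = 1 := by
    have h1 : R.rank ≤ 1 := by
      have hrange : LinearMap.range R.mulVecLin ≤ K ∙ A.mulVec v := by
        rintro _ ⟨x, rfl⟩
        rw [Matrix.mulVecLin_apply, hRx]
        exact Submodule.smul_mem _ _ (Submodule.mem_span_singleton_self _)
      have := Submodule.finrank_mono hrange
      rwa [finrank_span_singleton hAv] at this
    have h2 : 1 ≤ R.rank := by
      have hmem : A.mulVec v ∈ LinearMap.range R.mulVecLin :=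
        ⟨v, by rw [Matrix.mulVecLin_apply, hRv]⟩
      have hle : (K ∙ A.mulVec v) ≤ LinearMap.range R.mulVecLin :=
        (Submodule.span_singleton_le_iff_mem _ _).mpr hmem
      have := Submodule.finrank_mono hle
      rwa [finrank_span_singleton hAv] at this
    omega
  refine ⟨R, A - R, hRrk, hRtr, ?_, ?_, by abel⟩
  · rw [Matrix.trace_sub, htr, hRtr, sub_zero]
  · -- rank (A - R) = m
    have hv0 : v ≠ 0 := by
      intro h
      apply hAv
      rw [h, Matrix.mulVec_zero]
    have hvker : v ∉ LinearMap.ker A.mulVecLin := by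
      rw [LinearMap.mem_ker, Matrix.mulVecLin_apply]
      exact hAv
    have hBv : (A - R).mulVec v = 0 := by
      rw [Matrix.sub_mulVec, hRv, sub_self]
    have hkerB : LinearMap.ker A.mulVecLin ⊔ (K ∙ v) ≤ LinearMap.ker (A - R).mulVecLin := by
      apply sup_le
      · intro u hu
        have hu' : A.mulVec u = 0 := hu
        rw [LinearMap.mem_ker, Matrix.mulVecLin_apply, Matrix.sub_mulVec, hu', hRx,
          hφU u (Submodule.mem_sup_left hu), zero_smul, sub_zero]
      · intro x hx
        obtain ⟨a, rfl⟩ := Submodule.mem_span_singleton.mp hx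
        rw [LinearMap.mem_ker, Matrix.mulVecLin_apply, Matrix.mulVec_smul, hBv, smul_zero]
    have hdisj : Disjoint (LinearMap.ker A.mulVecLin) (K ∙ v) :=
      (Submodule.disjoint_span_singleton' hv0).mpr hvker
    have hsup : finrank K ↥(LinearMap.ker A.mulVecLin ⊔ (K ∙ v)) =
        finrank K ↥(LinearMap.ker A.mulVecLin) + 1 := by
      have h := Submodule.finrank_sup_add_finrank_inf_eq
        (LinearMap.ker A.mulVecLin) (K ∙ v)
      rw [disjoint_iff.mp hdisj, finrank_bot, finrank_span_singleton hv0] at h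
      omega
    have hmono := Submodule.finrank_mono hkerB
    rw [hsup] at hmono
    have hrnA := LinearMap.finrank_range_add_finrank_ker A.mulVecLin
    have hrnB := LinearMap.finrank_range_add_finrank_ker (A - R).mulVecLin
    have hpin : finrank K (Fin n → K) = n := by simp
    rw [hpin] at hrnA hrnB
    have hArk : finrank K ↥(LinearMap.range A.mulVecLin) = m + 1 := hrk
    have hle : (A - R).rank ≤ m := by
      have : (A - R).rank = finrank K ↥(LinearMap.range (A - R).mulVecLin) := rfl
      omega
    have hge : m ≤ (A - R).rank := by
      have h := rank_add_le' R (A - R)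
      rw [show R + (A - R) = A by abel] at h
      omega
    omega

end Step

private lemma main_aux {K : Type*} [Field K] [CharZero K] (k : ℕ) :
    ∀ {n : ℕ} (A : Matrix (Fin n) (Fin n) K), A.trace = 0 → A.rank = k → 1 ≤ k →
    ∃ f : Fin k → Matrix (Fin n) (Fin n) K,
      (∀ i, (f i).rank = 1 ∧ (f i).trace = 0) ∧ A = ∑ i, f i := by
  induction k with
  | zero => intro n A _ _ h; omega
  | succ m ih =>
    intro n A htr hrk _
    rcases Nat.eq_zero_or_pos m with rfl | hm
    · exact ⟨fun _ => A, fun _ => ⟨hrk, htr⟩, by simp⟩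
    · obtain ⟨R, B, hR1, hRtr, hBtr, hBrk, hAB⟩ := step A htr hrk
      obtain ⟨f', hf', hsum⟩ := ih B hBtr hBrk hm
      refine ⟨Fin.cons R f', ?_, ?_⟩
      · intro i
        refine Fin.cases ?_ ?_ i
        · exact ⟨hR1, hRtr⟩
        · intro j; simpa using hf' j
      · rw [Fin.sum_cons, ← hsum, hAB]

/-- A traceless rank-k matrix is a sum of k traceless rank-one matrices. -/
theorem stmt2 {K : Type*} [Field K] [IsAlgClosed K] [CharZero K] {n k : ℕ}
    (hk1 : 1 ≤ k) (hkn : k ≤ n) (A : Matrix (Fin n) (Fin n) K)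
    (htr : A.trace = 0) (hrk : A.rank = k) :
    ∃ f : Fin k → Matrix (Fin n) (Fin n) K,
      (∀ i, (f i).rank = 1 ∧ (f i).trace = 0) ∧ A = ∑ i, f i :=
  main_aux k A htr hrk hk1
end

section
/- For n ≥ 2 and 2 ≤ k ≤ n, the set of n×n traceless matrices over ℂ that are sums of k traceless rank-one matrices is exactly the set of traceless matrices of rank at most k. -/
open Matrix Module Submodule

namespace Stmt3Aux

variable {n : ℕ}

private lemma eq_zero_of_forall_mulVec {A : Matrix (Fin n) (Fin n) ℂ}
    (h : ∀ v, A *ᵥ v = 0) : A = 0 := by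
  ext i j
  simpa using congrFun (h (Pi.single j 1)) i

private lemma vecMulVec_mulVec' (x y v : Fin n → ℂ) :
    vecMulVec x y *ᵥ v = (y ⬝ᵥ v) • x := by
  ext i
  simp only [vecMulVec_apply, mulVec, dotProduct, Pi.smul_apply, smul_eq_mul, Finset.mul_sum]
  rw [Finset.sum_mul]
  exact Finset.sum_congr rfl fun j _ => by ring

private lemma trace_vecMulVec' (x y : Fin n → ℂ) : (vecMulVec x y).trace = y ⬝ᵥ x := by
  simp [Matrix.trace, Matrix.diag, vecMulVec_apply, dotProduct, mul_comm]

private lemma rank_ne_zero_of_mulVec_ne_zero {A : Matrix (Fin n) (Fin n) ℂ} {v : Fin n → ℂ}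
    (h : A *ᵥ v ≠ 0) : A.rank ≠ 0 := by
  intro h0
  have hbot : LinearMap.range A.mulVecLin = ⊥ := Submodule.finrank_eq_zero.mp h0
  have : A.mulVecLin v ∈ (⊥ : Submodule ℂ (Fin n → ℂ)) := hbot ▸ LinearMap.mem_range_self _ v
  exact h (by simpa [Matrix.mulVecLin_apply] using this)

private lemma eq_zero_of_rank_eq_zero {A : Matrix (Fin n) (Fin n) ℂ} (h : A.rank = 0) : A = 0 := by
  apply eq_zero_of_forall_mulVec
  intro v
  by_contra hv
  exact rank_ne_zero_of_mulVec_ne_zero hv h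

private lemma rank_vecMulVec_eq_one {x y : Fin n → ℂ} (hx : x ≠ 0) (hy : y ≠ 0) :
    (vecMulVec x y).rank = 1 := by
  have hle : LinearMap.range (vecMulVec x y).mulVecLin ≤ ℂ ∙ x := by
    rintro - ⟨v, rfl⟩
    rw [Matrix.mulVecLin_apply, vecMulVec_mulVec']
    exact Submodule.smul_mem _ _ (Submodule.mem_span_singleton_self x)
  have h1 : (vecMulVec x y).rank ≤ 1 := by
    have := Submodule.finrank_mono hle
    rwa [finrank_span_singleton hx] at this
  obtain ⟨j, hj⟩ := Function.ne_iff.mp hy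
  have hne : vecMulVec x y *ᵥ Pi.single j 1 ≠ 0 := by
    rw [vecMulVec_mulVec']
    have : y ⬝ᵥ Pi.single j 1 = y j := by simp
    rw [this]
    exact smul_ne_zero (by simpa using hj) hx
  have h2 := rank_ne_zero_of_mulVec_ne_zero hne
  omega

private lemma rank_add_le' (A B : Matrix (Fin n) (Fin n) ℂ) :
    (A + B).rank ≤ A.rank + B.rank := by
  have hle : LinearMap.range (A + B).mulVecLin ≤
      LinearMap.range A.mulVecLin ⊔ LinearMap.range B.mulVecLin := by
    rintro - ⟨v, rfl⟩
    refine Submodule.mem_sup.mpr ⟨A *ᵥ v, ⟨v, rfl⟩, B *ᵥ v, ⟨v, rfl⟩, ?_⟩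
    simp [Matrix.mulVecLin_apply, Matrix.add_mulVec]
  exact (Submodule.finrank_mono hle).trans
    (Submodule.finrank_add_le_finrank_add_finrank _ _)

private lemma rank_sum_le' {ι : Type*} (s : Finset ι) (f : ι → Matrix (Fin n) (Fin n) ℂ) :
    (∑ i ∈ s, f i).rank ≤ ∑ i ∈ s, (f i).rank := by
  classical
  induction s using Finset.cons_induction with
  | empty => simp
  | cons a s ha ih =>
    rw [Finset.sum_cons, Finset.sum_cons]
    exact (rank_add_le' _ _).trans (add_le_add_right ih _)

private lemma dot_single_fun (h' : (Fin n → ℂ) →ₗ[ℂ] ℂ) (w : Fin n → ℂ) :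
    (fun j => h' (Pi.single j 1)) ⬝ᵥ w = h' w := by
  have hw : ∑ j, w j • (Pi.single j 1 : Fin n → ℂ) = w := by
    have : ∀ j, w j • (Pi.single j 1 : Fin n → ℂ) = Pi.single j (w j) := by
      intro j; ext i; simp [Pi.single_apply, mul_ite]
    simp_rw [this]
    exact Finset.univ_sum_single w
  calc (fun j => h' (Pi.single j 1)) ⬝ᵥ w
      = ∑ j, w j • h' ((Pi.single j 1 : Fin n → ℂ)) := by
        simp [dotProduct, mul_comm, smul_eq_mul]
    _ = h' (∑ j, w j • (Pi.single j 1 : Fin n → ℂ)) := by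
        rw [map_sum]
        exact Finset.sum_congr rfl fun j _ => (h'.map_smul (w j) _).symm
    _ = h' w := by rw [hw]

private lemma exists_dot_eq {x y : Fin n → ℂ} (h : x ∉ span ℂ {y}) :
    ∃ u : Fin n → ℂ, u ⬝ᵥ x = 1 ∧ u ⬝ᵥ y = 0 := by
  set p : Submodule ℂ (Fin n → ℂ) := span ℂ {y} with hp
  have hx : p.mkQ x ≠ 0 := by
    simpa [Submodule.mkQ_apply, Submodule.Quotient.mk_eq_zero] using h
  obtain ⟨g, hg⟩ : ∃ g : Module.Dual ℂ ((Fin n → ℂ) ⧸ p), g (p.mkQ x) ≠ 0 := by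
    by_contra hg
    push_neg at hg
    exact hx ((Module.forall_dual_apply_eq_zero_iff ℂ _).1 hg)
  set h' : (Fin n → ℂ) →ₗ[ℂ] ℂ := (g (p.mkQ x))⁻¹ • (g ∘ₗ p.mkQ) with hh
  refine ⟨fun j => h' (Pi.single j 1), ?_, ?_⟩
  · rw [dot_single_fun]
    simp only [hh, LinearMap.smul_apply, LinearMap.comp_apply, smul_eq_mul]
    exact inv_mul_cancel₀ hg
  · rw [dot_single_fun]
    have : p.mkQ y = 0 := by
      simp [Submodule.mkQ_apply, Submodule.Quotient.mk_eq_zero, hp,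
        Submodule.mem_span_singleton_self]
    simp [hh, this]

private lemma trace_mulVecLin (A : Matrix (Fin n) (Fin n) ℂ) :
    LinearMap.trace ℂ (Fin n → ℂ) A.mulVecLin = A.trace := by
  rw [LinearMap.trace_eq_matrix_trace ℂ (Pi.basisFun ℂ (Fin n)),
    LinearMap.toMatrix_eq_toMatrix']
  rw [show A.mulVecLin = Matrix.toLin' A from rfl, LinearMap.toMatrix'_toLin']

private lemma exists_not_mem_span (A : Matrix (Fin n) (Fin n) ℂ) (hA : A ≠ 0)
    (ht : A.trace = 0) :
    ∃ v, A *ᵥ v ∉ span ℂ {(A * A) *ᵥ v} := by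
  by_contra hcon
  push_neg at hcon
  have hc : ∀ v, ∃ c : ℂ, A *ᵥ v = c • ((A * A) *ᵥ v) := by
    intro v
    obtain ⟨c, hcv⟩ := Submodule.mem_span_singleton.mp (hcon v)
    exact ⟨c, hcv.symm⟩
  set φ := A.mulVecLin with hφ
  set φ2 := (A * A).mulVecLin with hφ2
  have hcomp : φ2 = φ ∘ₗ φ := by rw [hφ, hφ2, Matrix.mulVecLin_mul]
  have hker : LinearMap.ker φ2 = LinearMap.ker φ := by
    apply le_antisymm
    · intro v hv
      obtain ⟨c, hcv⟩ := hc v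
      have : (A * A) *ᵥ v = 0 := hv
      simp only [LinearMap.mem_ker, hφ, Matrix.mulVecLin_apply]
      rw [hcv, this, smul_zero]
    · intro v hv
      have : A *ᵥ v = 0 := hv
      simp only [LinearMap.mem_ker, hφ2, Matrix.mulVecLin_apply]
      rw [← Matrix.mulVec_mulVec, this, Matrix.mulVec_zero]
  have hrange : LinearMap.range φ2 = LinearMap.range φ := by
    have hle : LinearMap.range φ2 ≤ LinearMap.range φ := by
      rw [hcomp]; exact LinearMap.range_comp_le_range _ _
    apply Submodule.eq_of_le_of_finrank_le hle
    have e1 := φ.finrank_range_add_finrank_ker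
    have e2 := φ2.finrank_range_add_finrank_ker
    rw [hker] at e2
    omega
  have hw : ∀ w ∈ LinearMap.range φ, ∃ c : ℂ, w = c • (A *ᵥ w) := by
    intro w hwmem
    rw [← hrange] at hwmem
    obtain ⟨v', rfl⟩ := hwmem
    obtain ⟨c, hcv⟩ := hc v'
    refine ⟨c, ?_⟩
    have : A *ᵥ (A *ᵥ v') = A *ᵥ (c • ((A * A) *ᵥ v')) := by rw [← hcv]
    rw [Matrix.mulVec_smul] at this
    simp only [hφ2, Matrix.mulVecLin_apply]
    rw [← Matrix.mulVec_mulVec] at this ⊢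
    exact this
  have heig : ∀ w ∈ LinearMap.range φ, w ≠ 0 → ∃ c : ℂ, c ≠ 0 ∧ A *ᵥ w = c⁻¹ • w := by
    intro w hwmem hw0
    obtain ⟨c, hcw⟩ := hw w hwmem
    have hc0 : c ≠ 0 := by rintro rfl; simp at hcw; exact hw0 hcw
    refine ⟨c, hc0, ?_⟩
    nth_rewrite 2 [hcw]
    rw [smul_smul, inv_mul_cancel₀ hc0, one_smul]
  have hv0 : ∃ v0, A *ᵥ v0 ≠ 0 := by
    by_contra h0
    push_neg at h0
    exact hA (eq_zero_of_forall_mulVec h0)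
  obtain ⟨v0, hv0⟩ := hv0
  have hw0mem : A *ᵥ v0 ∈ LinearMap.range φ := ⟨v0, rfl⟩
  obtain ⟨c0, hc00, hc0⟩ := heig _ hw0mem hv0
  set w0 := A *ᵥ v0 with hw0def
  set μ := c0⁻¹ with hμ
  have hμ0 : μ ≠ 0 := inv_ne_zero hc00
  have huniv : ∀ w ∈ LinearMap.range φ, A *ᵥ w = μ • w := by
    intro w hwmem
    by_cases hwz : w = 0
    · simp [hwz]
    obtain ⟨c, hcz, hcw⟩ := heig w hwmem hwz
    by_cases hspan : ∃ t : ℂ, w = t • w0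
    · obtain ⟨t, rfl⟩ := hspan
      rw [Matrix.mulVec_smul, hc0, smul_smul, smul_smul, mul_comm]
    · have hsum_mem : w + w0 ∈ LinearMap.range φ := add_mem hwmem hw0mem
      have hsum0 : w + w0 ≠ 0 := by
        intro h
        refine hspan ⟨-1, ?_⟩
        rw [neg_smul, one_smul, eq_neg_iff_add_eq_zero]
        exact h
      obtain ⟨d, hdz, hdw⟩ := heig _ hsum_mem hsum0
      have heq : c⁻¹ • w + μ • w0 = d⁻¹ • w + d⁻¹ • w0 := by
        have h1 := hdw
        rw [Matrix.mulVec_add, hcw, hc0, smul_add] at h1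
        exact h1
      have heq2 : (c⁻¹ - d⁻¹) • w = (d⁻¹ - μ) • w0 := by
        linear_combination (norm := module) heq
      by_cases hcd : c⁻¹ - d⁻¹ = 0
      · have hdμ : d⁻¹ - μ = 0 := by
          by_contra hne
          apply hv0
          have : w0 = (d⁻¹ - μ)⁻¹ • ((c⁻¹ - d⁻¹) • w) := by
            rw [heq2, smul_smul, inv_mul_cancel₀ hne, one_smul]
          rw [this, hcd, zero_smul, smul_zero]
        have : c⁻¹ = μ := by
          have h1 : c⁻¹ = d⁻¹ := by linear_combination hcd
          have h2 : d⁻¹ = μ := by linear_combination hdμ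
          rw [h1, h2]
        rw [hcw, this]
      · exact absurd ⟨(c⁻¹ - d⁻¹)⁻¹ * (d⁻¹ - μ), by
          rw [mul_smul, ← heq2, smul_smul, inv_mul_cancel₀ hcd, one_smul]⟩ hspan
  have hAA : A * A = μ • A := by
    have hz : ∀ v, (A * A - μ • A) *ᵥ v = 0 := by
      intro v
      rw [Matrix.sub_mulVec, ← Matrix.mulVec_mulVec, huniv (A *ᵥ v) ⟨v, rfl⟩,
        Matrix.smul_mulVec, sub_self]
    have := eq_zero_of_forall_mulVec hz
    rw [sub_eq_zero] at this
    exact this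
  set P := μ⁻¹ • A with hPdef
  have hPP : P * P = P := by
    rw [hPdef, Matrix.smul_mul, Matrix.mul_smul, hAA, smul_smul, smul_smul,
      mul_assoc, inv_mul_cancel₀ hμ0, mul_one]
  have hPtrace : P.trace = 0 := by
    rw [hPdef, Matrix.trace_smul, ht, smul_zero]
  have hproj : LinearMap.IsProj (LinearMap.range P.mulVecLin) P.mulVecLin := by
    constructor
    · intro x
      exact LinearMap.mem_range_self _ x
    · rintro - ⟨z, rfl⟩
      have h1 : (P * P).mulVecLin z = P.mulVecLin z := by rw [hPP]
      rw [Matrix.mulVecLin_mul] at h1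
      exact h1
  have htr := hproj.trace
  rw [trace_mulVecLin, hPtrace] at htr
  have hfr : finrank ℂ (LinearMap.range P.mulVecLin) = 0 := by exact_mod_cast htr.symm
  have hPbot : LinearMap.range P.mulVecLin = ⊥ := Submodule.finrank_eq_zero.mp hfr
  have hP0 : P = 0 := by
    apply eq_zero_of_forall_mulVec
    intro v
    have hmem : P.mulVecLin v ∈ (⊥ : Submodule ℂ (Fin n → ℂ)) :=
      hPbot ▸ LinearMap.mem_range_self _ v
    simpa [Matrix.mulVecLin_apply] using hmem
  apply hA
  have hAμP : A = μ • P := by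
    rw [hPdef, smul_smul, mul_inv_cancel₀ hμ0, one_smul]
  rw [hAμP, hP0, smul_zero]

private lemma rank_drop (A : Matrix (Fin n) (Fin n) ℂ) (u v : Fin n → ℂ)
    (h1 : u ⬝ᵥ (A *ᵥ v) = 1) :
    (A - vecMulVec (A *ᵥ v) (u ᵥ* A)).rank < A.rank := by
  set B := vecMulVec (A *ᵥ v) (u ᵥ* A) with hB
  set φ := A.mulVecLin with hφ
  set ψ : (Fin n → ℂ) →ₗ[ℂ] ℂ :=
    { toFun := fun w => u ⬝ᵥ (A *ᵥ w)
      map_add' := fun w1 w2 => by simp [Matrix.mulVec_add, dotProduct_add]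
      map_smul' := fun c w => by simp [Matrix.mulVec_smul, dotProduct_smul, smul_eq_mul] }
    with hψ
  have hψv : ψ v = 1 := h1
  have hsub : ∀ w, (A - B) *ᵥ w = A *ᵥ (w - ψ w • v) := by
    intro w
    rw [Matrix.sub_mulVec, Matrix.mulVec_sub, Matrix.mulVec_smul]
    congr 1
    rw [hB, vecMulVec_mulVec']
    congr 1
    rw [← Matrix.dotProduct_mulVec]
    rfl
  have hrange : LinearMap.range (A - B).mulVecLin ≤ Submodule.map φ (LinearMap.ker ψ) := by
    rintro - ⟨w, rfl⟩
    refine ⟨w - ψ w • v, ?_, ?_⟩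
    · refine SetLike.mem_coe.mpr (LinearMap.mem_ker.mpr ?_)
      rw [map_sub, ψ.map_smul, hψv, smul_eq_mul, mul_one, sub_self]
    · rw [Matrix.mulVecLin_apply]
      exact (hsub w) ▸ rfl
  have hlt : Submodule.map φ (LinearMap.ker ψ) < LinearMap.range φ := by
    rw [SetLike.lt_iff_le_and_exists]
    constructor
    · rintro - ⟨w, -, rfl⟩
      exact LinearMap.mem_range_self _ w
    · refine ⟨A *ᵥ v, ⟨v, rfl⟩, ?_⟩
      rintro ⟨w, hwker, hweq⟩
      have hψw : ψ w = 0 := hwker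
      have h2 : ψ w = 1 := by
        show u ⬝ᵥ (A *ᵥ w) = 1
        have h3 : A *ᵥ w = A *ᵥ v := hweq
        rw [h3, h1]
      rw [hψw] at h2
      exact one_ne_zero h2.symm
  exact lt_of_le_of_lt (Submodule.finrank_mono hrange) (Submodule.finrank_lt_finrank_of_lt hlt)

private lemma main_ind : ∀ k : ℕ, ∀ A : Matrix (Fin n) (Fin n) ℂ, A ≠ 0 → A.trace = 0 →
    A.rank ≤ k →
    ∃ f : Fin k → Matrix (Fin n) (Fin n) ℂ,
      (∀ i, (f i).rank = 1 ∧ (f i).trace = 0) ∧ A = ∑ i, f i := by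
  intro k
  induction k with
  | zero =>
    intro A hA ht hr
    exact absurd (eq_zero_of_rank_eq_zero (Nat.le_zero.mp hr)) hA
  | succ k ih =>
    intro A hA ht hr
    obtain ⟨v, hv⟩ := exists_not_mem_span A hA ht
    obtain ⟨u, hu1, hu2⟩ := exists_dot_eq hv
    set x := A *ᵥ v with hx
    set y := u ᵥ* A with hy
    have hx0 : x ≠ 0 := by
      intro h; rw [h] at hu1; simp at hu1
    have hy0 : y ≠ 0 := by
      intro h
      have hz : y ⬝ᵥ v = 0 := by rw [h]; simp
      rw [hy, ← Matrix.dotProduct_mulVec, hu1] at hz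
      exact one_ne_zero hz
    set B := vecMulVec x y with hB
    have hBrank : B.rank = 1 := rank_vecMulVec_eq_one hx0 hy0
    have hBtrace : B.trace = 0 := by
      rw [hB, trace_vecMulVec', hy, hx, ← Matrix.dotProduct_mulVec, Matrix.mulVec_mulVec]
      exact hu2
    set A' := A - B with hA'
    have htA' : A'.trace = 0 := by rw [hA', Matrix.trace_sub, ht, hBtrace, sub_zero]
    have hrA' : A'.rank < A.rank := by
      rw [hA', hB, hx, hy]
      exact rank_drop A u v hu1
    by_cases hA'0 : A' = 0
    · have hAB : A = B := by rwa [← sub_eq_zero]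
      refine ⟨fun _ => ((k + 1 : ℂ))⁻¹ • A, fun i => ⟨?_, ?_⟩, ?_⟩
      · have hrw : ((k + 1 : ℂ))⁻¹ • A = vecMulVec (((k + 1 : ℂ))⁻¹ • x) y := by
          rw [hAB, hB]
          ext i j
          simp only [Matrix.smul_apply, vecMulVec_apply, Pi.smul_apply, smul_eq_mul]
          ring
        rw [hrw]
        have hk1 : ((k : ℂ) + 1) ≠ 0 := Nat.cast_add_one_ne_zero k
        exact rank_vecMulVec_eq_one (smul_ne_zero (inv_ne_zero hk1) hx0) hy0
      · rw [Matrix.trace_smul, ht, smul_zero]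
      · rw [Finset.sum_const, Finset.card_univ, Fintype.card_fin,
          ← Nat.cast_smul_eq_nsmul ℂ, smul_smul]
        push_cast
        rw [mul_inv_cancel₀ (Nat.cast_add_one_ne_zero k), one_smul]
    · have hrk : A'.rank ≤ k := by omega
      obtain ⟨g, hg, hsum⟩ := ih A' hA'0 htA' hrk
      refine ⟨Fin.cons B g, fun i => ?_, ?_⟩
      · refine Fin.cases ?_ (fun j => ?_) i
        · simpa using ⟨hBrank, hBtrace⟩
        · simpa using hg j
      · rw [Fin.sum_cons, ← hsum, hA', add_comm, sub_add_cancel]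

end Stmt3Aux

open Stmt3Aux in
/-- kC = {A ∈ sl_n : rank A ≤ k} for 2 ≤ k ≤ n. -/
theorem stmt3 {n k : ℕ} (hn : 2 ≤ n) (hk2 : 2 ≤ k) (hkn : k ≤ n) :
    {A : Matrix (Fin n) (Fin n) ℂ | ∃ f : Fin k → Matrix (Fin n) (Fin n) ℂ,
        (∀ i, (f i).rank = 1 ∧ (f i).trace = 0) ∧ A = ∑ i, f i} =
      {A : Matrix (Fin n) (Fin n) ℂ | A.trace = 0 ∧ A.rank ≤ k} := by
  ext A
  simp only [Set.mem_setOf_eq]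
  constructor
  · rintro ⟨f, hf, rfl⟩
    constructor
    · rw [Matrix.trace_sum]
      exact Finset.sum_eq_zero fun i _ => (hf i).2
    · calc (∑ i, f i).rank ≤ ∑ i : Fin k, (f i).rank := rank_sum_le' _ _
        _ = ∑ _i : Fin k, 1 := Finset.sum_congr rfl fun i _ => (hf i).1
        _ = k := by simp
  · rintro ⟨ht, hr⟩
    by_cases hA : A = 0
    · subst hA
      obtain ⟨m, rfl⟩ : ∃ m, k = m + 1 := ⟨k - 1, by omega⟩
      have hm : 1 ≤ m := by omega
      haveI : NeZero n := ⟨by omega⟩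
      have h01 : (0 : Fin n) ≠ (1 : Fin n) := by
        simp only [ne_eq, Fin.ext_iff, Fin.val_zero, Fin.val_one']
        have h1n : 1 % n = 1 := Nat.mod_eq_of_lt (by omega)
        omega
      set x0 : Fin n → ℂ := Pi.single 0 1 with hx0def
      set y0 : Fin n → ℂ := Pi.single 1 1 with hy0def
      have hx0 : x0 ≠ 0 := by
        intro h
        have := congrFun h 0
        simp [hx0def] at this
      have hy0 : y0 ≠ 0 := by
        intro h
        have := congrFun h 1
        simp [hy0def] at this
      set E := vecMulVec x0 y0 with hE
      have hErank : E.rank = 1 := rank_vecMulVec_eq_one hx0 hy0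
      have hEtrace : E.trace = 0 := by
        rw [hE, trace_vecMulVec']
        simp [hx0def, hy0def, dotProduct, Pi.single_apply, h01.symm]
        omega
      refine ⟨Fin.cons (-(m : ℂ) • E) (fun _ => E), fun i => ?_, ?_⟩
      · refine Fin.cases ?_ (fun j => ?_) i
        · constructor
          · have hrw : (-(m : ℂ)) • E = vecMulVec ((-(m : ℂ)) • x0) y0 := by
              rw [hE]
              ext i j
              simp only [Matrix.smul_apply, vecMulVec_apply, Pi.smul_apply, smul_eq_mul]
              ring
            rw [Fin.cons_zero, hrw]
            have hmne : (-(m : ℂ)) ≠ 0 := by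
              simp only [ne_eq, neg_eq_zero, Nat.cast_eq_zero]
              omega
            exact rank_vecMulVec_eq_one (smul_ne_zero hmne hx0) hy0
          · rw [Fin.cons_zero, Matrix.trace_smul, hEtrace, smul_zero]
        · rw [Fin.cons_succ]
          exact ⟨hErank, hEtrace⟩
      · rw [Fin.sum_cons, Finset.sum_const, Finset.card_univ, Fintype.card_fin,
          ← Nat.cast_smul_eq_nsmul ℂ, neg_smul, neg_add_cancel]
    · exact main_ind k A hA ht hr
end

section
/- Let (·,·) be a nondegenerate alternating bilinear form on V = K^{2n} over a field K of characteristic ≠ 2, and let A ∈ sp(V) (i.e. (Ax,y) = -(x,Ay)) be nonzero. Then there exists x ∈ V with (x, Ax) ≠ 0. -/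
/-- For a nonzero symplectic endomorphism A there is x with (x,Ax) ≠ 0. -/
theorem stmt5 {K V : Type*} [Field K] [AddCommGroup V] [Module K V]
    [FiniteDimensional K V] {n : ℕ} (hdim : Module.finrank K V = 2 * n)
    (h2 : (2 : K) ≠ 0)
    (B : LinearMap.BilinForm K V) (hB : B.Nondegenerate) (halt : ∀ x, B x x = 0)
    (A : V →ₗ[K] V) (hA : ∀ x y, B (A x) y = - B x (A y)) (hA0 : A ≠ 0) :
    ∃ x, B x (A x) ≠ 0 := by
  by_contra h
  push_neg at h
  have skew : ∀ x y, B x y = - B y x := by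
    intro x y
    have hxy := halt (x + y)
    have hx := halt x
    have hy := halt y
    simp only [map_add, LinearMap.add_apply] at hxy
    linear_combination hxy - hx - hy
  have key : ∀ x y, B x (A y) = 0 := by
    intro x y
    have h1 := h (x + y)
    simp only [map_add, LinearMap.add_apply] at h1
    have hx := h x
    have hy := h y
    have h2' : B x (A y) + B y (A x) = 0 := by linear_combination h1 - hx - hy
    have h3 : B y (A x) = B x (A y) := by
      rw [skew y (A x), hA]; ring
    have h4 : 2 * B x (A y) = 0 := by linear_combination h2' - h3
    rcases mul_eq_zero.mp h4 with h5 | h5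
    · exact absurd h5 h2
    · exact h5
  apply hA0
  ext y
  simp only [LinearMap.zero_apply]
  apply hB.1 (A y)
  intro x
  rw [hA, key, neg_zero]
end

section
/- Let A be a nonzero element of sp_{2n}(K), K algebraically closed of characteristic 0. Then there exists x ∈ V = K^{2n} such that rank(A - Ax ⊗ φ(Ax)) = rank(A) - 1, where φ: V → V* is induced by the symplectic form. -/
/-- Rank reduction in sp_{2n}: subtracting Ax ⊗ φ(Ax) decreases the rank by one. -/
theorem stmt6 {K V : Type*} [Field K] [IsAlgClosed K] [CharZero K]
    [AddCommGroup V] [Module K V] [FiniteDimensional K V] {n : ℕ}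
    (hdim : Module.finrank K V = 2 * n)
    (B : LinearMap.BilinForm K V) (hB : B.Nondegenerate) (halt : ∀ x, B x x = 0)
    (A : V →ₗ[K] V) (hA : ∀ x y, B (A x) y = - B x (A y)) (hA0 : A ≠ 0) :
    ∃ x : V,
      Module.finrank K (LinearMap.range (A - (B.flip (A x)).smulRight (A x))) =
        Module.finrank K (LinearMap.range A) - 1 := by
  classical
  -- skew symmetry
  have hskew : ∀ u v : V, B u v = - B v u := by
    intro u v
    have h := halt (u + v)
    simp only [map_add, LinearMap.add_apply] at h
    rw [halt u, halt v] at h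
    linear_combination h
  -- the quadratic form x ↦ B x (A x) is not identically zero
  have hq : ∃ x : V, B x (A x) ≠ 0 := by
    by_contra h
    push_neg at h
    have h2 : ∀ u v : V, B u (A v) = 0 := by
      intro u v
      have hp := h (u + v)
      simp only [map_add, LinearMap.add_apply] at hp
      rw [h u, h v] at hp
      have h3 : B v (A u) = B u (A v) := by
        rw [hskew v (A u), hA u v]; ring
      rw [h3] at hp
      have h2' : (2 : K) * B u (A v) = 0 := by linear_combination hp
      have : (2 : K) ≠ 0 := two_ne_zero
      exact (mul_eq_zero.mp h2').resolve_left this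
    apply hA0
    ext v
    simp only [LinearMap.zero_apply]
    apply hB.1 (A v)
    intro m
    rw [hA v m, h2]
    ring
  -- find x with B x (A x) = 1
  obtain ⟨x₀, hx₀⟩ := hq
  obtain ⟨c, hc⟩ := IsAlgClosed.exists_pow_nat_eq ((B x₀ (A x₀))⁻¹) (n := 2) (by norm_num)
  obtain ⟨x, hx1⟩ : ∃ x : V, B x (A x) = 1 := by
    refine ⟨c • x₀, ?_⟩
    simp only [map_smul, LinearMap.smul_apply, smul_eq_mul]
    linear_combination (B x₀ (A x₀)) * hc + inv_mul_cancel₀ hx₀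
  refine ⟨x, ?_⟩
  set w := A x with hw
  set M := A - (B.flip w).smulRight w with hM
  have hMapp : ∀ z, M z = A z - B z w • w := by
    intro z
    simp [hM, LinearMap.sub_apply, LinearMap.smulRight_apply]
  have hxne : x ≠ 0 := by
    intro h
    rw [h] at hx1
    simp at hx1
  have hAx : w ≠ 0 := by
    intro h
    rw [h] at hx1
    simp at hx1
  have hker : LinearMap.ker M = LinearMap.ker A ⊔ Submodule.span K {x} := by
    apply le_antisymm
    · intro z hz
      rw [LinearMap.mem_ker, hMapp, sub_eq_zero] at hz
      have hmem : z - B z w • x ∈ LinearMap.ker A := by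
        rw [LinearMap.mem_ker, map_sub, map_smul, hz, ← hw, sub_self]
      have hzeq : z = (z - B z w • x) + B z w • x := by abel
      rw [hzeq]
      exact Submodule.add_mem_sup hmem
        (Submodule.smul_mem _ _ (Submodule.mem_span_singleton_self x))
    · rw [sup_le_iff]
      constructor
      · intro z hz
        rw [LinearMap.mem_ker] at hz ⊢
        have hBzw : B z w = 0 := by
          have h := hA z x
          rw [hz] at h
          simp only [map_zero, LinearMap.zero_apply] at h
          rw [hw]
          exact neg_eq_zero.mp h.symm
        rw [hMapp, hz, hBzw]
        simp
      · rw [Submodule.span_le, Set.singleton_subset_iff]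
        rw [SetLike.mem_coe, LinearMap.mem_ker, hMapp, hx1]
        simp [hw]
  have hinf : LinearMap.ker A ⊓ Submodule.span K {x} = ⊥ := by
    rw [eq_bot_iff]
    intro y hy
    obtain ⟨hy1, hy2⟩ := Submodule.mem_inf.mp hy
    obtain ⟨a, rfl⟩ := Submodule.mem_span_singleton.mp hy2
    rw [LinearMap.mem_ker, map_smul] at hy1
    rcases smul_eq_zero.mp hy1 with h | h
    · simp [h]
    · exact absurd h hAx
  have hd1 : Module.finrank K (LinearMap.ker M) =
      Module.finrank K (LinearMap.ker A) + 1 := by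
    have hs := Submodule.finrank_sup_add_finrank_inf_eq (LinearMap.ker A)
      (Submodule.span K {x})
    rw [hinf, finrank_bot, finrank_span_singleton hxne] at hs
    rw [hker]
    omega
  have h1 := LinearMap.finrank_range_add_finrank_ker M
  have h2 := LinearMap.finrank_range_add_finrank_ker A
  have hr : 1 ≤ Module.finrank K (LinearMap.range A) := by
    rw [Nat.one_le_iff_ne_zero]
    intro h
    have : LinearMap.range A = ⊥ := Submodule.finrank_eq_zero.mp h
    exact hA0 (LinearMap.range_eq_bot.mp this)
  omega
end

section
/- Every element A of sp_{2n}(ℂ) of rank k (1 ≤ k ≤ 2n) can be written as a sum of k rank-one elements of sp_{2n}(ℂ); consequently, for 2 ≤ k ≤ 2n, the set of sums of k rank-one elements of sp_{2n} equals {A ∈ sp_{2n} : rank(A) ≤ k}. -/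
open Matrix

set_option linter.unusedSectionVars false
set_option maxHeartbeats 1000000

section Aux

variable {m : Type*} [Fintype m] [DecidableEq m]

lemma sp7_mulVec_vecMulVec (u w : m → ℂ) (x : m → ℂ) :
    (vecMulVec u w) *ᵥ x = (w ⬝ᵥ x) • u := by
  ext i
  simp [mulVec, vecMulVec_apply, dotProduct, Finset.mul_sum, mul_comm, mul_assoc, mul_left_comm]

lemma sp7_transpose_vecMulVec (u w : m → ℂ) : (vecMulVec u w)ᵀ = vecMulVec w u := by
  ext i j; simp [vecMulVec_apply, mul_comm]

lemma sp7_isSymm_dot {S : Matrix m m ℂ} (hS : S.IsSymm) (x y : m → ℂ) :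
    (S *ᵥ x) ⬝ᵥ y = x ⬝ᵥ (S *ᵥ y) := by
  rw [dotProduct_mulVec]
  congr 1
  conv_rhs => rw [← hS.eq]
  rw [vecMul_transpose]

lemma sp7_rank_vecMulVec_one {u w : m → ℂ} (hu : u ≠ 0) (hw : w ≠ 0) :
    (vecMulVec u w).rank = 1 := by
  have hr : LinearMap.range (vecMulVec u w).mulVecLin = Submodule.span ℂ {u} := by
    apply le_antisymm
    · rintro y ⟨x, rfl⟩
      rw [mulVecLin_apply, sp7_mulVec_vecMulVec]
      exact Submodule.smul_mem _ _ (Submodule.mem_span_singleton_self u)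
    · rw [Submodule.span_singleton_le_iff_mem]
      obtain ⟨j, hj⟩ : ∃ j, w j ≠ 0 := by
        by_contra h; push_neg at h; exact hw (funext h)
      refine ⟨Pi.single j (w j)⁻¹, ?_⟩
      rw [mulVecLin_apply, sp7_mulVec_vecMulVec, dotProduct_single, mul_inv_cancel₀ hj, one_smul]
  rw [Matrix.rank, hr, finrank_span_singleton hu]

lemma sp7_rank_smul_le (c : ℂ) (A : Matrix m m ℂ) : (c • A).rank ≤ A.rank := by
  have : c • A = (c • (1 : Matrix m m ℂ)) * A := by simp [smul_mul_assoc]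
  rw [this]; exact rank_mul_le_right _ _

lemma sp7_rank_add_le (A B : Matrix m m ℂ) : (A + B).rank ≤ A.rank + B.rank := by
  have hle : LinearMap.range (A + B).mulVecLin ≤
      LinearMap.range A.mulVecLin ⊔ LinearMap.range B.mulVecLin := by
    rintro y ⟨x, rfl⟩
    rw [mulVecLin_add]
    exact Submodule.add_mem_sup ⟨x, rfl⟩ ⟨x, rfl⟩
  calc (A + B).rank ≤ Module.finrank ℂ (LinearMap.range A.mulVecLin ⊔ LinearMap.range B.mulVecLin :
        Submodule ℂ (m → ℂ)) := Submodule.finrank_mono hle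
    _ ≤ A.rank + B.rank := by
        have := Submodule.finrank_sup_add_finrank_inf_eq
          (LinearMap.range A.mulVecLin) (LinearMap.range B.mulVecLin)
        unfold Matrix.rank
        omega

lemma sp7_rank_sum_le {ι : Type*} (s : Finset ι) (f : ι → Matrix m m ℂ) :
    (∑ i ∈ s, f i).rank ≤ ∑ i ∈ s, (f i).rank := by
  classical
  induction s using Finset.cons_induction with
  | empty => simp
  | cons a s ha ih =>
    rw [Finset.sum_cons, Finset.sum_cons]
    exact le_trans (sp7_rank_add_le _ _) (by omega)

lemma sp7_rank_eq_zero_iff {A : Matrix m m ℂ} : A.rank = 0 ↔ A = 0 := by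
  constructor
  · intro h
    have : LinearMap.range A.mulVecLin = ⊥ := Submodule.finrank_eq_zero.mp h
    have h0 : A.mulVecLin = 0 := LinearMap.range_eq_bot.mp this
    ext i j
    have h2 : A *ᵥ Pi.single j 1 = 0 := LinearMap.congr_fun h0 (Pi.single j 1)
    have := congrFun h2 i
    simpa [mulVec_single] using this
  · rintro rfl; exact rank_zero

lemma sp7_exists_aniso {S : Matrix m m ℂ} (hS : S.IsSymm) (h0 : S ≠ 0) :
    ∃ x, x ⬝ᵥ (S *ᵥ x) ≠ 0 := by
  by_contra h; push_neg at h
  apply h0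
  have key : ∀ x y : m → ℂ, x ⬝ᵥ (S *ᵥ y) = 0 := by
    intro x y
    have hxy := h (x + y)
    have hy := h y
    have hx := h x
    have hsym : y ⬝ᵥ (S *ᵥ x) = x ⬝ᵥ (S *ᵥ y) := by
      rw [← sp7_isSymm_dot hS, dotProduct_comm]
    rw [add_dotProduct, mulVec_add, dotProduct_add, dotProduct_add, hx] at hxy
    rw [hsym] at hxy
    have : (2 : ℂ) * (x ⬝ᵥ (S *ᵥ y)) = 0 := by rw [two_mul]; linear_combination hxy - hy
    simpa using this
  ext i j
  have := key (Pi.single i 1) (Pi.single j 1)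
  simpa [mulVec_single, dotProduct, Pi.single_apply] using this

lemma sp7_vecMulVec_smul_smul (c : ℂ) (u w : m → ℂ) :
    vecMulVec (c • u) (c • w) = (c * c) • vecMulVec u w := by
  ext i j; simp [vecMulVec_apply]; ring

lemma sp7_rank_step {S : Matrix m m ℂ} (hS : S.IsSymm) {x : m → ℂ}
    (hc : x ⬝ᵥ (S *ᵥ x) ≠ 0) :
    (S - (x ⬝ᵥ (S *ᵥ x))⁻¹ • vecMulVec (S *ᵥ x) (S *ᵥ x)).IsSymm ∧
    S *ᵥ x ≠ 0 ∧
    (S - (x ⬝ᵥ (S *ᵥ x))⁻¹ • vecMulVec (S *ᵥ x) (S *ᵥ x)).rank + 1 = S.rank := by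
  set c := x ⬝ᵥ (S *ᵥ x) with hcdef
  set w := S *ᵥ x with hwdef
  set V : Matrix m m ℂ := c⁻¹ • vecMulVec w w with hV
  set S' := S - V with hS'
  have hw0 : w ≠ 0 := by
    intro h; apply hc; rw [← hwdef] at *; rw [h] at hcdef; simp [hcdef]
  have hsymm' : S'.IsSymm := by
    rw [Matrix.IsSymm, hS', Matrix.transpose_sub, hS.eq, hV, Matrix.transpose_smul,
      sp7_transpose_vecMulVec]
  have hVx : V *ᵥ x = w := by
    rw [hV, smul_mulVec, sp7_mulVec_vecMulVec]
    have h3 : w ⬝ᵥ x = c := by rw [dotProduct_comm]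
    rw [h3, smul_smul]
    rw [inv_mul_cancel₀ hc]
    exact MulAction.one_smul w
  have hS'x : S' *ᵥ x = 0 := by rw [hS', sub_mulVec, hVx, ← hwdef, sub_self]
  have hker : ∀ y, S *ᵥ y = 0 → S' *ᵥ y = 0 := by
    intro y hy
    have hwy : w ⬝ᵥ y = 0 := by rw [hwdef, sp7_isSymm_dot hS, hy, dotProduct_zero]
    rw [hS', sub_mulVec, hy, hV, smul_mulVec, sp7_mulVec_vecMulVec, hwy, zero_smul,
      smul_zero, sub_zero]
  have hx_notker : x ∉ LinearMap.ker S.mulVecLin := by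
    intro h
    rw [LinearMap.mem_ker, mulVecLin_apply] at h
    exact hw0 h
  have hkerle : LinearMap.ker S.mulVecLin ⊔ Submodule.span ℂ {x} ≤ LinearMap.ker S'.mulVecLin := by
    rw [sup_le_iff]
    constructor
    · intro y hy
      rw [LinearMap.mem_ker, mulVecLin_apply]
      exact hker y hy
    · rw [Submodule.span_singleton_le_iff_mem, LinearMap.mem_ker, mulVecLin_apply]
      exact hS'x
  have hlt : LinearMap.ker S.mulVecLin < LinearMap.ker S.mulVecLin ⊔ Submodule.span ℂ {x} := by
    refine lt_of_le_of_ne le_sup_left ?_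
    intro h
    exact hx_notker (h ▸ (le_sup_right : Submodule.span ℂ {x} ≤ _)
      (Submodule.mem_span_singleton_self x))
  have hdim : Module.finrank ℂ (LinearMap.ker S.mulVecLin) <
      Module.finrank ℂ (LinearMap.ker S'.mulVecLin) :=
    lt_of_lt_of_le (Submodule.finrank_lt_finrank_of_lt hlt) (Submodule.finrank_mono hkerle)
  have rn : S.rank + Module.finrank ℂ (LinearMap.ker S.mulVecLin) = Module.finrank ℂ (m → ℂ) :=
    LinearMap.finrank_range_add_finrank_ker S.mulVecLin
  have rn' : S'.rank + Module.finrank ℂ (LinearMap.ker S'.mulVecLin) = Module.finrank ℂ (m → ℂ) :=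
    LinearMap.finrank_range_add_finrank_ker S'.mulVecLin
  have h2 : S.rank ≤ S'.rank + 1 := by
    have hSd : S = S' + V := by rw [hS', sub_add_cancel]
    calc S.rank ≤ S'.rank + V.rank := hSd ▸ sp7_rank_add_le S' V
      _ ≤ S'.rank + 1 := by
          have hVr : V.rank ≤ 1 := by
            rw [hV]
            calc (c⁻¹ • vecMulVec w w).rank ≤ (vecMulVec w w).rank := sp7_rank_smul_le _ _
              _ = 1 := sp7_rank_vecMulVec_one hw0 hw0
          omega
  exact ⟨hsymm', hw0, by omega⟩

/-- Symmetric decomposition into rank ones. -/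
lemma sp7_sym_decomp : ∀ (r : ℕ) (S : Matrix m m ℂ), S.IsSymm → S.rank = r →
    ∃ v : Fin r → (m → ℂ), (∀ i, v i ≠ 0) ∧ S = ∑ i, vecMulVec (v i) (v i) := by
  intro r
  induction r with
  | zero =>
    intro S hS hr
    exact ⟨Fin.elim0, fun i => i.elim0, by simpa using sp7_rank_eq_zero_iff.mp hr⟩
  | succ r ih =>
    intro S hS hr
    have hS0 : S ≠ 0 := by
      intro h; rw [h, rank_zero] at hr; omega
    obtain ⟨x, hc⟩ := sp7_exists_aniso hS hS0
    obtain ⟨hsymm', hw0, hrank⟩ := sp7_rank_step hS hc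
    set c := x ⬝ᵥ (S *ᵥ x)
    set w := S *ᵥ x
    set S' := S - c⁻¹ • vecMulVec w w with hS'def
    obtain ⟨z, hz⟩ := IsAlgClosed.exists_pow_nat_eq (k := ℂ) c⁻¹ (by norm_num : (0:ℕ) < 2)
    have hz' : z * z = c⁻¹ := by rw [← hz]; ring
    have hzne : z ≠ 0 := by
      intro h; rw [h] at hz'; simp at hz'; exact hc hz'.symm
    have hrank' : S'.rank = r := by omega
    obtain ⟨v', hv'0, hv'⟩ := ih S' hsymm' hrank'
    refine ⟨Fin.cons (z • w) v', ?_, ?_⟩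
    · intro i
      refine Fin.cases ?_ ?_ i
      · exact smul_ne_zero hzne hw0
      · exact fun j => hv'0 j
    · rw [Fin.sum_univ_succ]
      simp only [Fin.cons_zero, Fin.cons_succ]
      have : vecMulVec (z • w) (z • w) = c⁻¹ • vecMulVec w w := by
        rw [sp7_vecMulVec_smul_smul, hz']
      rw [this, ← hv', hS'def]
      ring_nf
      abel

lemma sp7_split_decomp {k : ℕ} {S : Matrix m m ℂ} (v : Fin (k + 1) → m → ℂ)
    (hv0 : ∀ i, v i ≠ 0) (hsum : S = ∑ i, vecMulVec (v i) (v i)) :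
    ∃ v' : Fin (k + 2) → m → ℂ, (∀ i, v' i ≠ 0) ∧ S = ∑ i, vecMulVec (v' i) (v' i) := by
  obtain ⟨z, hz⟩ := IsAlgClosed.exists_pow_nat_eq (k := ℂ) 2⁻¹ (by norm_num : (0:ℕ) < 2)
  have hz' : z * z = 2⁻¹ := by rw [← hz]; ring
  have hzne : z ≠ 0 := by intro h; rw [h] at hz'; simp at hz'
  refine ⟨Fin.cons (z • v 0) (Fin.cons (z • v 0) (fun i => v i.succ)), ?_, ?_⟩
  · intro i
    refine Fin.cases ?_ (fun j => ?_) i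
    · exact smul_ne_zero hzne (hv0 0)
    · refine Fin.cases ?_ (fun l => ?_) j
      · exact smul_ne_zero hzne (hv0 0)
      · exact hv0 l.succ
  · rw [Fin.sum_univ_succ, Fin.sum_univ_succ]
    simp only [Fin.cons_zero, Fin.cons_succ]
    rw [sp7_vecMulVec_smul_smul, hz', hsum, Fin.sum_univ_succ, ← add_assoc, ← add_smul]
    norm_num

lemma sp7_pad_decomp {S : Matrix m m ℂ} {k0 : ℕ} (hk0 : 1 ≤ k0)
    (h : ∃ v : Fin k0 → m → ℂ, (∀ i, v i ≠ 0) ∧ S = ∑ i, vecMulVec (v i) (v i)) :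
    ∀ k, k0 ≤ k → ∃ v : Fin k → m → ℂ, (∀ i, v i ≠ 0) ∧ S = ∑ i, vecMulVec (v i) (v i) := by
  intro k hk
  induction k, hk using Nat.le_induction with
  | base => exact h
  | succ p hp ih =>
    obtain ⟨q, rfl⟩ : ∃ q, p = q + 1 := ⟨p - 1, by omega⟩
    obtain ⟨v, hv0, hsum⟩ := ih
    exact sp7_split_decomp v hv0 hsum

lemma sp7_zero_decomp {w : m → ℂ} (hw : w ≠ 0) :
    ∃ v : Fin 2 → m → ℂ, (∀ i, v i ≠ 0) ∧ (0 : Matrix m m ℂ) = ∑ i, vecMulVec (v i) (v i) := by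
  refine ⟨![w, Complex.I • w], ?_, ?_⟩
  · intro i
    fin_cases i
    · exact hw
    · exact smul_ne_zero Complex.I_ne_zero hw
  · rw [Fin.sum_univ_two]
    show (0 : Matrix m m ℂ) = vecMulVec w w + vecMulVec (Complex.I • w) (Complex.I • w)
    rw [sp7_vecMulVec_smul_smul, Complex.I_mul_I, neg_one_smul, add_neg_cancel]

end Aux

section Assemble

variable {N : ℕ}

lemma sp7_sp_iff {Jm : Matrix (Fin N) (Fin N) ℂ} (hJT : Jmᵀ = -Jm)
    (B : Matrix (Fin N) (Fin N) ℂ) :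
    (Bᵀ * Jm = -(Jm * B)) ↔ (Jm * B).IsSymm := by
  rw [Matrix.IsSymm, Matrix.transpose_mul, hJT, Matrix.mul_neg]
  constructor
  · intro h; rw [h, neg_neg]
  · intro h; rw [← h, neg_neg]

lemma sp7_assemble {Jm : Matrix (Fin N) (Fin N) ℂ} (hJT : Jmᵀ = -Jm) (hJJ : Jm * Jm = -1)
    (A : Matrix (Fin N) (Fin N) ℂ) {k : ℕ} (v : Fin k → Fin N → ℂ) (hv0 : ∀ i, v i ≠ 0)
    (hsum : Jm * A = ∑ i, vecMulVec (v i) (v i)) :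
    ∃ f : Fin k → Matrix (Fin N) (Fin N) ℂ,
      (∀ i, (f i).rank = 1 ∧ (f i)ᵀ * Jm = -(Jm * f i)) ∧ A = ∑ i, f i := by
  have hJJ' : (-Jm) * Jm = 1 := by rw [neg_mul, hJJ, neg_neg]
  have hJJ'' : Jm * (-Jm) = 1 := by rw [mul_neg, hJJ, neg_neg]
  have hunit : IsUnit (-Jm).det := by
    apply IsUnit.of_mul_eq_one Jm.det
    rw [← Matrix.det_mul, hJJ', Matrix.det_one]
  refine ⟨fun i => (-Jm) * vecMulVec (v i) (v i), fun i => ⟨?_, ?_⟩, ?_⟩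
  · rw [rank_mul_eq_right_of_isUnit_det _ _ hunit]
    exact sp7_rank_vecMulVec_one (hv0 i) (hv0 i)
  · rw [sp7_sp_iff hJT]
    have : Jm * ((-Jm) * vecMulVec (v i) (v i)) = vecMulVec (v i) (v i) := by
      rw [← mul_assoc, hJJ'', one_mul]
    rw [this, Matrix.IsSymm, sp7_transpose_vecMulVec]
  · have hA : (-Jm) * (Jm * A) = A := by rw [← mul_assoc, hJJ', one_mul]
    rw [← hA, hsum, Finset.mul_sum]

end Assemble

/-- Every rank-k element of sp_{2n}(ℂ) is a sum of k rank-one elements of sp_{2n},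
and for 2 ≤ k ≤ 2n the set of such sums is exactly the rank ≤ k part of sp_{2n}. -/
theorem stmt7 (n : ℕ) (Jm : Matrix (Fin (n + n)) (Fin (n + n)) ℂ)
    (hJm : Jm = (Matrix.fromBlocks (0 : Matrix (Fin n) (Fin n) ℂ) 1 (-1) 0).submatrix
      finSumFinEquiv.symm finSumFinEquiv.symm) :
    (∀ A : Matrix (Fin (n + n)) (Fin (n + n)) ℂ, Aᵀ * Jm = -(Jm * A) →
      ∀ k : ℕ, 1 ≤ k → k ≤ 2 * n → A.rank = k →
        ∃ f : Fin k → Matrix (Fin (n + n)) (Fin (n + n)) ℂ,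
          (∀ i, (f i).rank = 1 ∧ (f i)ᵀ * Jm = -(Jm * f i)) ∧ A = ∑ i, f i) ∧
    (∀ k : ℕ, 2 ≤ k → k ≤ 2 * n →
      {A : Matrix (Fin (n + n)) (Fin (n + n)) ℂ |
          ∃ f : Fin k → Matrix (Fin (n + n)) (Fin (n + n)) ℂ,
            (∀ i, (f i).rank = 1 ∧ (f i)ᵀ * Jm = -(Jm * f i)) ∧ A = ∑ i, f i} =
        {A : Matrix (Fin (n + n)) (Fin (n + n)) ℂ |
          Aᵀ * Jm = -(Jm * A) ∧ A.rank ≤ k}) := by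
  have hJT : Jmᵀ = -Jm := by
    rw [hJm, transpose_submatrix, fromBlocks_transpose]
    have hB : (fromBlocks (0 : Matrix (Fin n) (Fin n) ℂ)ᵀ (-1 : Matrix (Fin n) (Fin n) ℂ)ᵀ
        (1 : Matrix (Fin n) (Fin n) ℂ)ᵀ (0 : Matrix (Fin n) (Fin n) ℂ)ᵀ)
        = -(fromBlocks (0 : Matrix (Fin n) (Fin n) ℂ) 1 (-1) 0) := by
      ext (i|i) (j|j) <;> simp [fromBlocks, Matrix.one_apply]
    rw [hB]
    rfl
  have hJJ : Jm * Jm = -1 := by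
    rw [hJm, submatrix_mul_equiv, fromBlocks_multiply]
    have h1 : (fromBlocks ((0:Matrix (Fin n) (Fin n) ℂ) * 0 + 1 * -1) (0 * 1 + 1 * 0)
        ((-1) * 0 + 0 * -1) ((-1) * 1 + 0 * 0))
        = -(1 : Matrix (Fin n ⊕ Fin n) (Fin n ⊕ Fin n) ℂ) := by
      ext (i|i) (j|j) <;> simp [fromBlocks, Matrix.one_apply]
    rw [h1]
    have : ((-1 : Matrix (Fin n ⊕ Fin n) (Fin n ⊕ Fin n) ℂ)).submatrix
        (⇑finSumFinEquiv.symm) (⇑finSumFinEquiv.symm)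
        = -((1 : Matrix (Fin n ⊕ Fin n) (Fin n ⊕ Fin n) ℂ).submatrix
        (⇑finSumFinEquiv.symm) (⇑finSumFinEquiv.symm)) := rfl
    rw [this, Matrix.submatrix_one_equiv]
  have hJdet : IsUnit Jm.det := by
    apply IsUnit.of_mul_eq_one (-Jm).det
    rw [← Matrix.det_mul, mul_neg, hJJ, neg_neg, Matrix.det_one]
  constructor
  · intro A hA k hk1 hk2 hrk
    have hSsym : (Jm * A).IsSymm := (sp7_sp_iff hJT A).mp hA
    have hSrank : (Jm * A).rank = k := by
      rw [rank_mul_eq_right_of_isUnit_det _ _ hJdet, hrk]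
    obtain ⟨v, hv0, hsum⟩ := sp7_sym_decomp k (Jm * A) hSsym hSrank
    exact sp7_assemble hJT hJJ A v hv0 hsum
  · intro k hk2 hk2n
    ext A
    simp only [Set.mem_setOf_eq]
    constructor
    · rintro ⟨f, hf, rfl⟩
      refine ⟨?_, ?_⟩
      · calc (∑ i, f i)ᵀ * Jm = ∑ i, (f i)ᵀ * Jm := by
              rw [Matrix.transpose_sum, Finset.sum_mul]
          _ = ∑ i, -(Jm * f i) := Finset.sum_congr rfl (fun i _ => (hf i).2)
          _ = -(Jm * ∑ i, f i) := by rw [Finset.mul_sum]; simp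
      · calc (∑ i, f i).rank ≤ ∑ i, (f i).rank := sp7_rank_sum_le _ _
          _ = ∑ _i : Fin k, 1 := Finset.sum_congr rfl (fun i _ => (hf i).1)
          _ = k := by simp
    · rintro ⟨hA, hrk⟩
      have hSsym : (Jm * A).IsSymm := (sp7_sp_iff hJT A).mp hA
      have hSrank : (Jm * A).rank = A.rank := rank_mul_eq_right_of_isUnit_det _ _ hJdet
      have hdec : ∃ v : Fin k → Fin (n+n) → ℂ,
          (∀ i, v i ≠ 0) ∧ Jm * A = ∑ i, vecMulVec (v i) (v i) := by
        rcases Nat.eq_zero_or_pos A.rank with h0 | hpos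
        · have hS0 : Jm * A = 0 := sp7_rank_eq_zero_iff.mp (by rw [hSrank, h0])
          have hw : (Pi.single (⟨0, by omega⟩ : Fin (n + n)) 1 : Fin (n+n) → ℂ) ≠ 0 := by
            intro h
            have := congrFun h ⟨0, by omega⟩
            simp at this
          have h2 := sp7_zero_decomp hw
          rw [← hS0] at h2
          exact sp7_pad_decomp (by norm_num) h2 k hk2
        · obtain ⟨v, hv0, hsum⟩ := sp7_sym_decomp A.rank (Jm * A) hSsym hSrank
          exact sp7_pad_decomp hpos ⟨v, hv0, hsum⟩ k (by omega)
      obtain ⟨v, hv0, hsum⟩ := hdec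
      exact sp7_assemble hJT hJJ A v hv0 hsum
end

section
/- Let (·,·) be a nondegenerate symmetric bilinear form on V = K^n over a field K of characteristic ≠ 2, and let W = span{y₁, y₂} be a 2-dimensional subspace of V. Then the space {A ∈ o(V) : im A ⊆ W} is one-dimensional, spanned by y₁⊗φ(y₂) - y₂⊗φ(y₁). -/
lemma aux_dualvec {K V : Type*} [Field K] [AddCommGroup V] [Module K V] [FiniteDimensional K V]
    (B : LinearMap.BilinForm K V) (hB : B.Nondegenerate)
    {u v : V} (h : u ∉ Submodule.span K ({v} : Set V)) :
    ∃ x : V, B x u = 1 ∧ B x v = 0 := by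
  obtain ⟨f, hfu, hfv⟩ := Submodule.exists_dual_map_eq_bot_of_notMem h inferInstance
  have hfv' : f v = 0 := by
    have : f v ∈ Submodule.map f (Submodule.span K ({v} : Set V)) :=
      Submodule.mem_map_of_mem (Submodule.mem_span_singleton_self v)
    rw [hfv] at this
    simpa using this
  refine ⟨(B.toDual hB).symm ((f u)⁻¹ • f), ?_, ?_⟩
  · rw [LinearMap.BilinForm.apply_toDual_symm_apply]
    simp [inv_mul_cancel₀ hfu]
  · rw [LinearMap.BilinForm.apply_toDual_symm_apply]
    simp [hfv']

/-- The skew endomorphisms with image in a fixed 2-dimensional space form a line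
spanned by y₁⊗φ(y₂) - y₂⊗φ(y₁). -/
theorem stmt9 {K V : Type*} [Field K] [AddCommGroup V] [Module K V]
    [FiniteDimensional K V] (h2 : (2 : K) ≠ 0)
    (B : LinearMap.BilinForm K V) (hB : B.Nondegenerate)
    (hsymm : ∀ x y, B x y = B y x)
    (y₁ y₂ : V)
    (hW : Module.finrank K (Submodule.span K ({y₁, y₂} : Set V)) = 2) :
    (B.flip y₂).smulRight y₁ - (B.flip y₁).smulRight y₂ ≠ 0 ∧
    ∀ A : V →ₗ[K] V,
      ((∀ x y, B (A x) y = - B x (A y)) ∧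
        LinearMap.range A ≤ Submodule.span K ({y₁, y₂} : Set V)) ↔
      ∃ c : K, A = c • ((B.flip y₂).smulRight y₁ - (B.flip y₁).smulRight y₂) := by
  set A₀ : V →ₗ[K] V := (B.flip y₂).smulRight y₁ - (B.flip y₁).smulRight y₂ with hA₀
  have hA₀x : ∀ x, A₀ x = B x y₂ • y₁ - B x y₁ • y₂ := by
    intro x; simp [hA₀]
  -- linear independence
  have li : LinearIndependent K ![y₁, y₂] := by
    rw [linearIndependent_iff_card_eq_finrank_span]
    have : Set.range ![y₁, y₂] = {y₁, y₂} := by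
      ext z; simp [Matrix.range_cons, Matrix.range_empty]; tauto
    rw [Set.finrank, this, hW]
    simp
  have li' := LinearIndependent.pair_iff.1 li
  have hn1 : y₁ ∉ Submodule.span K ({y₂} : Set V) := by
    intro h
    obtain ⟨a, ha⟩ := Submodule.mem_span_singleton.1 h
    have := (li' (-1) a (by rw [add_comm, ha]; simp)).1
    simp at this
  have hn2 : y₂ ∉ Submodule.span K ({y₁} : Set V) := by
    intro h
    obtain ⟨a, ha⟩ := Submodule.mem_span_singleton.1 h
    have := (li' a (-1) (by rw [ha]; simp)).2
    simp at this
  obtain ⟨x₁, hx₁₁, hx₁₂⟩ := aux_dualvec B hB hn1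
  obtain ⟨x₂, hx₂₂, hx₂₁⟩ := aux_dualvec B hB hn2
  have hy₁ : y₁ ≠ 0 := by
    intro h
    exact one_ne_zero ((li' 1 0 (by simp [h])).1)
  constructor
  · intro h
    have := hA₀x x₂
    rw [h] at this
    rw [hx₂₂, hx₂₁] at this
    simp at this
    exact hy₁ this.symm
  intro A
  constructor
  · rintro ⟨hskew, hrange⟩
    -- decomposition identity
    have key : ∀ x, A x = B (A x) x₁ • y₁ + B (A x) x₂ • y₂ := by
      intro x
      have hx : A x ∈ Submodule.span K ({y₁, y₂} : Set V) :=
        hrange (LinearMap.mem_range_self A x)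
      obtain ⟨a, b, hab⟩ := Submodule.mem_span_pair.1 hx
      have h1 : B (A x) x₁ = a := by
        rw [← hab]
        simp [hsymm y₁ x₁, hsymm y₂ x₁, hx₁₁, hx₁₂]
      have h2 : B (A x) x₂ = b := by
        rw [← hab]
        simp [hsymm y₁ x₂, hsymm y₂ x₂, hx₂₁, hx₂₂]
      rw [h1, h2, hab]
    have s0 : ∀ x, B (A x) x = 0 := by
      intro x
      have h := hskew x x
      rw [hsymm x (A x)] at h
      have h' : (2 : K) * B (A x) x = 0 := by linear_combination h
      exact (mul_eq_zero.1 h').resolve_left h2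
    set c : K := B (A x₁) x₂ with hc
    have hAx₁ : A x₁ = c • y₂ := by
      rw [key x₁, s0 x₁, ← hc]; simp
    have hA21 : B (A x₂) x₁ = -c := by
      rw [hskew x₂ x₁, hsymm x₂ (A x₁), hc]
    have hAx₂ : A x₂ = (-c) • y₁ := by
      rw [key x₂, s0 x₂, hA21]; simp
    refine ⟨-c, ?_⟩
    ext x
    rw [key x, hskew x x₁, hskew x x₂, hAx₁, hAx₂]
    simp only [LinearMap.neg_apply, LinearMap.smul_apply, hA₀x, map_smul, map_neg,
      smul_eq_mul, neg_neg, neg_smul, smul_sub, smul_smul]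
    module
  · rintro ⟨c, rfl⟩
    constructor
    · intro x y
      simp only [LinearMap.smul_apply, hA₀x, map_smul, map_sub, map_smul, smul_eq_mul,
        LinearMap.sub_apply, LinearMap.map_sub, LinearMap.map_smul]
      rw [hsymm y₁ y, hsymm y₂ y]
      ring
    · rintro z ⟨x, rfl⟩
      simp only [LinearMap.smul_apply, hA₀x]
      apply Submodule.mem_span_pair.2
      exact ⟨c * B x y₂, -(c * B x y₁), by module⟩
end

section
/- Let A ∈ o(V) for a nondegenerate symmetric bilinear form on a finite-dimensional vector space V over a field of characteristic ≠ 2, and let J ∈ End(V) have rank one with rank(A - J) = rank(A) - 1. Then rank(A - (J - J^T)) = rank(A) - 2, where J^T is the adjoint of J with respect to the form. -/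
open Module LinearMap

/-- Rank reduction by two in o(V): if subtracting a rank-one J lowers the rank of A
by one, then subtracting J - Jᵀ lowers it by two. -/
theorem stmt10 {K V : Type*} [Field K] [AddCommGroup V] [Module K V]
    [FiniteDimensional K V] (h2 : (2 : K) ≠ 0)
    (B : LinearMap.BilinForm K V) (hB : B.Nondegenerate)
    (hsymm : ∀ x y, B x y = B y x)
    (A J JT : V →ₗ[K] V)
    (hA : ∀ x y, B (A x) y = - B x (A y))
    (hJT : ∀ x y, B (J x) y = B x (JT y))
    (hJ1 : Module.finrank K (LinearMap.range J) = 1)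
    (hred : Module.finrank K (LinearMap.range (A - J)) =
      Module.finrank K (LinearMap.range A) - 1) :
    Module.finrank K (LinearMap.range (A - (J - JT))) =
      Module.finrank K (LinearMap.range A) - 2 := by
  classical
  -- diagonal of the skew map vanishes
  have hdiag : ∀ x, B (A x) x = 0 := by
    intro x
    have h1 := hA x x
    rw [hsymm x (A x)] at h1
    have h3 : (2 : K) * B (A x) x = 0 := by linear_combination h1
    rcases mul_eq_zero.mp h3 with h | h
    · exact absurd h h2
    · exact h
  -- extract v spanning range J
  have hJbot : LinearMap.range J ≠ ⊥ := by
    intro h; rw [h] at hJ1; simp at hJ1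
  obtain ⟨v, hvmem, hvne⟩ := Submodule.exists_mem_ne_zero_of_ne_bot hJbot
  have hspan : LinearMap.range J = Submodule.span K {v} := by
    symm
    apply Submodule.eq_of_le_of_finrank_le
    · rwa [Submodule.span_singleton_le_iff_mem]
    · rw [hJ1, finrank_span_singleton hvne]
  -- construct φ with J x = φ x • v
  obtain ⟨w', hw'⟩ : ∃ w', B v w' ≠ 0 := by
    by_contra h; push_neg at h; exact hvne (hB.1 v h)
  set w : V := (B v w')⁻¹ • w' with hw
  have hvw : B v w = 1 := by
    rw [hw, map_smul]; rw [smul_eq_mul, inv_mul_cancel₀ hw']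
  set φ : V →ₗ[K] K := (B.flip w) ∘ₗ J with hφ
  have hJv : ∀ x, J x = φ x • v := by
    intro x
    have hmem : J x ∈ Submodule.span K {v} := hspan ▸ LinearMap.mem_range_self J x
    obtain ⟨c, hc⟩ := Submodule.mem_span_singleton.mp hmem
    have : φ x = c := by
      simp only [hφ, LinearMap.comp_apply, LinearMap.flip_apply]
      rw [← hc, map_smul, smul_eq_mul]
      simp only [LinearMap.BilinForm.flip_apply]
      rw [hvw, mul_one]
    rw [this, hc]
  -- construct u with B x u = φ x
  obtain ⟨u, hu⟩ : ∃ u, ∀ x, B x u = φ x := by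
    obtain ⟨u, hu⟩ := (B.toDual hB).surjective φ
    refine ⟨u, fun x => ?_⟩
    rw [hsymm x u]
    have : B.toDual hB u x = φ x := by rw [hu]
    rwa [LinearMap.BilinForm.toDual_def] at this
  -- identify JT
  have hJT' : ∀ x, JT x = B v x • u := by
    intro x
    have key : ∀ y, B (JT x - B v x • u) y = 0 := by
      intro y
      rw [hsymm, map_sub, map_smul]
      have h1 := hJT y x
      rw [hJv y, map_smul] at h1
      rw [← h1, hu y]
      simp [smul_eq_mul]; ring
    have h0 := hB.1 _ key
    rwa [sub_eq_zero] at h0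
  -- rank-nullity
  have hrn := LinearMap.finrank_range_add_finrank_ker A
  have hrnJ := LinearMap.finrank_range_add_finrank_ker (A - J)
  -- rank A ≥ 1
  have hrA1 : 1 ≤ finrank K (LinearMap.range A) := by
    by_contra h
    push_neg at h
    have h0 : finrank K (LinearMap.range A) = 0 := by omega
    have hA0 : A = 0 := LinearMap.range_eq_bot.mp (Submodule.finrank_eq_zero.mp h0)
    rw [h0] at hred
    rw [hA0, zero_sub, LinearMap.range_neg, hJ1] at hred
    omega
  -- find x₀ ∈ ker (A - J) with A x₀ ≠ 0
  have hknotle : ¬ (LinearMap.ker (A - J) ≤ LinearMap.ker A) := by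
    intro hle
    have := Submodule.finrank_mono hle
    omega
  obtain ⟨y₀, hy₀mem, hy₀not⟩ := SetLike.not_le_iff_exists.mp hknotle
  have hy₀ : A y₀ = φ y₀ • v := by
    have h0 : (A - J) y₀ = 0 := hy₀mem
    rw [LinearMap.sub_apply, sub_eq_zero] at h0
    rw [h0, hJv]
  have hφy₀ : φ y₀ ≠ 0 := by
    intro h
    apply hy₀not
    rw [LinearMap.mem_ker, hy₀, h, zero_smul]
  set x₀ : V := (φ y₀)⁻¹ • y₀ with hx₀
  have hx₀mem : x₀ ∈ LinearMap.ker (A - J) := Submodule.smul_mem _ _ hy₀mem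
  have hφx₀ : φ x₀ = 1 := by
    rw [hx₀, map_smul, smul_eq_mul, inv_mul_cancel₀ hφy₀]
  have hAx₀ : A x₀ = v := by
    rw [hx₀, map_smul, hy₀, smul_smul, inv_mul_cancel₀ hφy₀, one_smul]
  have hx₀ne : x₀ ≠ 0 := by
    intro h; rw [h, map_zero] at hφx₀; exact one_ne_zero hφx₀.symm
  have hBvx₀ : B v x₀ = 0 := by rw [← hAx₀]; exact hdiag x₀
  have hBx₀v : B x₀ v = 0 := by rw [hsymm]; exact hBvx₀
  -- ker A ≤ ker φ
  have hkersub : LinearMap.ker (A - J) ≤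
      (LinearMap.ker A ⊓ LinearMap.ker φ) ⊔ Submodule.span K {x₀} := by
    intro x hx
    have hx' : A x = φ x • v := by
      have h0 : (A - J) x = 0 := hx
      rw [LinearMap.sub_apply, sub_eq_zero] at h0
      rw [h0, hJv]
    have h1 : x - φ x • x₀ ∈ LinearMap.ker A ⊓ LinearMap.ker φ := by
      refine Submodule.mem_inf.mpr ⟨?_, ?_⟩
      · rw [LinearMap.mem_ker, map_sub, map_smul, hx', hAx₀, sub_self]
      · rw [LinearMap.mem_ker, map_sub, map_smul, hφx₀, smul_eq_mul, mul_one, sub_self]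
    have h2 : φ x • x₀ ∈ Submodule.span K {x₀} :=
      Submodule.smul_mem _ _ (Submodule.mem_span_singleton_self x₀)
    have : x = (x - φ x • x₀) + φ x • x₀ := by abel
    rw [this]
    exact Submodule.add_mem_sup h1 h2
  have hinf : LinearMap.ker A ⊓ LinearMap.ker φ = LinearMap.ker A := by
    apply Submodule.eq_of_le_of_finrank_le inf_le_left
    have h1 := Submodule.finrank_mono hkersub
    have h2 := Submodule.finrank_sup_add_finrank_inf_eq
      (LinearMap.ker A ⊓ LinearMap.ker φ) (Submodule.span K {x₀})
    have h3 : finrank K (Submodule.span K {x₀}) = 1 := finrank_span_singleton hx₀ne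
    have h4 := Submodule.finrank_mono (inf_le_left :
      LinearMap.ker A ⊓ LinearMap.ker φ ≤ LinearMap.ker A)
    omega
  have hkerφ : ∀ x, A x = 0 → φ x = 0 := by
    intro x hx
    have hx' : x ∈ LinearMap.ker A ⊓ LinearMap.ker φ := by
      rw [hinf]; exact LinearMap.mem_ker.mpr hx
    exact (Submodule.mem_inf.mp hx').2
  -- u ∈ range A
  have hrefl : B.IsRefl := fun x y h => by rw [hsymm]; exact h
  have hrange : LinearMap.range A = B.orthogonal (LinearMap.ker A) := by
    apply Submodule.eq_of_le_of_finrank_le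
    · rintro _ ⟨x, rfl⟩
      intro nk hnk
      show B nk (A x) = 0
      rw [hsymm, hA, LinearMap.mem_ker.mp hnk, map_zero, neg_zero]
    · rw [LinearMap.BilinForm.finrank_orthogonal hB]
      omega
  have humem : u ∈ LinearMap.range A := by
    rw [hrange]
    intro nk hnk
    show B nk u = 0
    rw [hu nk]
    exact hkerφ nk (LinearMap.mem_ker.mp hnk)
  obtain ⟨x₁, hx₁⟩ := humem
  have hφx₁ : φ x₁ = 0 := by
    rw [← hu x₁, hsymm, ← hx₁]; exact hdiag x₁
  have hBvx₁ : B v x₁ = -1 := by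
    rw [← hAx₀, hA, hx₁, hu x₀, hφx₀]
  have hune : u ≠ 0 := by
    intro h
    have := hu x₀
    rw [h, map_zero, hφx₀] at this
    exact one_ne_zero this.symm
  -- kernel inclusions
  have hker1 : LinearMap.ker (A - J) ≤ LinearMap.ker (A - (J - JT)) := by
    intro x hx
    have hx0 : (A - J) x = 0 := hx
    have hBvx : B v x = 0 := by
      have hx' : A x = φ x • v := by
        rw [LinearMap.sub_apply, sub_eq_zero] at hx0
        rw [hx0, hJv]
      rw [← hAx₀, hA, hx', map_smul, smul_eq_mul, hBx₀v, mul_zero, neg_zero]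
    rw [LinearMap.mem_ker, LinearMap.sub_apply, LinearMap.sub_apply]
    have : A x - (J x - JT x) = (A - J) x + JT x := by
      rw [LinearMap.sub_apply]; abel
    rw [this, hx0, zero_add, hJT', hBvx, zero_smul]
  have hx₁kerM : x₁ ∈ LinearMap.ker (A - (J - JT)) := by
    rw [LinearMap.mem_ker, LinearMap.sub_apply, LinearMap.sub_apply, hJv, hJT',
      hφx₁, hBvx₁, hx₁, zero_smul, neg_one_smul]
    abel
  have hx₁not : x₁ ∉ LinearMap.ker (A - J) := by
    intro h
    have h0 : (A - J) x₁ = 0 := h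
    rw [LinearMap.sub_apply, hJv, hφx₁, zero_smul, sub_zero, hx₁] at h0
    exact hune h0
  have hltker : LinearMap.ker (A - J) < LinearMap.ker (A - (J - JT)) :=
    lt_of_le_of_ne hker1 (fun h => hx₁not (h ▸ hx₁kerM))
  have hlt := Submodule.finrank_lt_finrank_of_lt hltker
  -- rank (A - J) ≥ 1
  have huAJ : u ∈ LinearMap.range (A - J) := by
    refine ⟨x₁, ?_⟩
    rw [LinearMap.sub_apply, hJv, hφx₁, zero_smul, sub_zero, hx₁]
  have hrAJ1 : 1 ≤ finrank K (LinearMap.range (A - J)) := by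
    have hle : Submodule.span K {u} ≤ LinearMap.range (A - J) := by
      rwa [Submodule.span_singleton_le_iff_mem]
    have := Submodule.finrank_mono hle
    rw [finrank_span_singleton hune] at this
    exact this
  -- range lower bound
  have hrangeAJ : LinearMap.range (A - J) ≤
      LinearMap.range (A - (J - JT)) ⊔ LinearMap.range JT := by
    rintro _ ⟨x, rfl⟩
    have : (A - J) x = (A - (J - JT)) x + (- JT x) := by
      simp only [LinearMap.sub_apply]; abel
    rw [this]
    exact Submodule.add_mem_sup (LinearMap.mem_range_self _ x)
      (Submodule.neg_mem _ (LinearMap.mem_range_self _ x))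
  have hJTrank : finrank K (LinearMap.range JT) ≤ 1 := by
    have hle : LinearMap.range JT ≤ Submodule.span K {u} := by
      rintro _ ⟨x, rfl⟩
      rw [hJT']
      exact Submodule.smul_mem _ _ (Submodule.mem_span_singleton_self u)
    have := Submodule.finrank_mono hle
    rwa [finrank_span_singleton hune] at this
  -- assemble
  have hrnM := LinearMap.finrank_range_add_finrank_ker (A - (J - JT))
  have hsup := Submodule.finrank_sup_add_finrank_inf_eq
    (LinearMap.range (A - (J - JT))) (LinearMap.range JT)
  have hsup2 := Submodule.finrank_mono hrangeAJ
  omega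
end

section
/- Let W be a K-vector space of finite dimension ≥ 4 over an algebraically closed field K of characteristic 0, equipped with a symmetric bilinear form B₁ (possibly degenerate) and a nondegenerate alternating bilinear form B₂. Then there exists a 2-dimensional subspace of W that is isotropic with respect to B₁ but not with respect to B₂. -/
/-- Lemma on a symmetric and a nondegenerate alternating bilinear form: there is a
2-dimensional subspace isotropic for the first but not for the second. -/
theorem stmt12 {K W : Type*} [Field K] [IsAlgClosed K] [CharZero K]
    [AddCommGroup W] [Module K W] [FiniteDimensional K W]
    (hdim : 4 ≤ Module.finrank K W)
    (B₁ B₂ : LinearMap.BilinForm K W)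
    (h1 : ∀ x y, B₁ x y = B₁ y x)
    (h2 : ∀ x, B₂ x x = 0) (hnd : B₂.Nondegenerate) :
    ∃ U : Submodule K W, Module.finrank K U = 2 ∧
      (∀ u ∈ U, ∀ v ∈ U, B₁ u v = 0) ∧
      ¬(∀ u ∈ U, ∀ v ∈ U, B₂ u v = 0) := by
  by_contra hcon
  push_neg at hcon
  have P : ∀ x y : W, B₁ x x = 0 → B₁ y y = 0 → B₁ x y = 0 → B₂ x y = 0 := by
    intro x y hx hy hxy
    by_contra hB2
    have hli : LinearIndependent K ![x, y] := by
      rw [LinearIndependent.pair_iff]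
      intro s t hst
      constructor
      · have := congrArg (fun w => B₂ w y) hst
        simp only [map_add, map_smul, LinearMap.add_apply, LinearMap.smul_apply,
          smul_eq_mul, h2, map_zero, LinearMap.zero_apply, mul_zero, add_zero] at this
        exact (mul_eq_zero.1 this).resolve_right hB2
      · have := congrArg (fun w => B₂ x w) hst
        simp only [map_add, map_smul, smul_eq_mul, map_zero, h2, mul_zero, zero_add] at this
        exact (mul_eq_zero.1 this).resolve_right hB2
    have hrange : (Set.range ![x, y]) = {x, y} := by
      simp [Set.range, Matrix.cons_val_zero, Matrix.cons_val_one]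
      ext w; constructor
      · rintro (rfl | rfl) <;> simp
      · rintro (rfl | rfl) <;> simp
    have hfr : Module.finrank K (Submodule.span K ({x, y} : Set W)) = 2 := by
      rw [← hrange, finrank_span_eq_card hli]
      simp
    have hiso : ∀ u ∈ Submodule.span K ({x, y} : Set W), ∀ v ∈ Submodule.span K ({x, y} : Set W), B₁ u v = 0 := by
      intro u hu w hw
      rw [Submodule.mem_span_pair] at hu hw
      obtain ⟨a, b, rfl⟩ := hu
      obtain ⟨c, d, rfl⟩ := hw
      have hyx : B₁ y x = 0 := by rw [← h1]; exact hxy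
      simp only [map_add, map_smul, LinearMap.add_apply, LinearMap.smul_apply, smul_eq_mul,
        hx, hy, hxy, hyx, mul_zero, add_zero, zero_add]
    have := hcon _ hfr hiso x (Submodule.subset_span (by simp)) y (Submodule.subset_span (by simp))
    exact hB2 this
  haveI : Invertible (2 : K) := invertibleOfNonzero two_ne_zero
  have hsymm : LinearMap.IsSymm B₁ := LinearMap.isSymm_def.mpr fun x y => h1 x y
  set nn := Module.finrank K W with hnn
  obtain ⟨v, hv⟩ := LinearMap.BilinForm.exists_orthogonal_basis (V := W) hsymm
  have hortho : ∀ i j : Fin nn, i ≠ j → B₁ (v i) (v j) = 0 := fun i j h => LinearMap.isOrthoᵢ_def.mp hv i j h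
  -- final contradiction helper
  have key : ∀ z : W, z ≠ 0 → (∀ j, B₂ z (v j) = 0) → False := by
    intro z hz hj
    have hB : B₂ z = 0 := v.ext fun i => by simpa using hj i
    exact hz (hnd.1 z fun w => by rw [hB]; simp)
  -- fresh index picker
  have fresh : ∀ a c : Fin nn, ∃ b e : Fin nn, b ≠ e ∧ b ≠ a ∧ b ≠ c ∧ e ≠ a ∧ e ≠ c := by
    intro a c
    have hcard : 1 < (({a, c}ᶜ : Finset (Fin nn))).card := by
      rw [Finset.card_compl]
      have h2' : ({a, c} : Finset (Fin nn)).card ≤ 2 := by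
        apply le_trans (Finset.card_insert_le _ _); simp
      have : Fintype.card (Fin nn) = nn := Fintype.card_fin nn
      omega
    obtain ⟨b, hb, e, he, hbe⟩ := Finset.one_lt_card.mp hcard
    simp only [Finset.mem_compl, Finset.mem_insert, Finset.mem_singleton, not_or] at hb he
    exact ⟨b, e, hbe, hb.1, hb.2, he.1, he.2⟩
  -- isotropy constructor
  have mkiso : ∀ (p q : Fin nn) (s : K), p ≠ q →
      s ^ 2 * B₁ (v q) (v q) = -(B₁ (v p) (v p)) →
      B₁ (v p + s • v q) (v p + s • v q) = 0 := by
    intro p q s hpq hs2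
    have h1' := hortho p q hpq
    have h2' := hortho q p hpq.symm
    simp only [map_add, map_smul, LinearMap.add_apply, LinearMap.smul_apply, smul_eq_mul]
    linear_combination h1' * s + h2' * s + hs2
  -- orthogonality constructor
  have mkorth : ∀ (p q p' q' : Fin nn) (s t : K), p ≠ p' → p ≠ q' → q ≠ p' → q ≠ q' →
      B₁ (v p + s • v q) (v p' + t • v q') = 0 := by
    intro p q p' q' s t hpp hpq hqp hqq
    simp only [map_add, map_smul, LinearMap.add_apply, LinearMap.smul_apply, smul_eq_mul,
      hortho p p' hpp, hortho p q' hpq, hortho q p' hqp, hortho q q' hqq]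
    ring
  by_cases hS : ∃ a b : Fin nn, a ≠ b ∧ B₁ (v a) (v a) ≠ 0 ∧ B₁ (v b) (v b) ≠ 0
  · by_cases hk : ∃ k : Fin nn, B₁ (v k) (v k) = 0
    · -- degenerate case with rank ≥ 2: kernel basis vector is B₂-orthogonal to everything
      obtain ⟨k, hk0⟩ := hk
      refine key (v k) (v.ne_zero k) fun j => ?_
      by_cases hdj : B₁ (v j) (v j) = 0
      · by_cases hjk : j = k
        · subst hjk; exact h2 _
        · exact P _ _ hk0 hdj (hortho k j fun h => hjk h.symm)
      · obtain ⟨a, b, hab, hda, hdb⟩ := hS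
        obtain ⟨b', hb'j, hdb'⟩ : ∃ b' : Fin nn, b' ≠ j ∧ B₁ (v b') (v b') ≠ 0 := by
          by_cases hja : j = a
          · exact ⟨b, by rw [hja]; exact hab.symm, hdb⟩
          · exact ⟨a, fun h => hja h.symm, hda⟩
        have hkj : k ≠ j := fun h => hdj (h ▸ hk0)
        have hkb' : k ≠ b' := fun h => hdb' (h ▸ hk0)
        obtain ⟨s, hs⟩ := IsAlgClosed.exists_pow_nat_eq
          (-(B₁ (v j) (v j)) / (B₁ (v b') (v b'))) two_pos
        have hs2 : s ^ 2 * B₁ (v b') (v b') = -(B₁ (v j) (v j)) := by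
          rw [hs]; field_simp
        have hiso₁ := mkiso j b' s (fun h => hb'j h.symm) hs2
        have hiso₂ := mkiso j b' (-s) (fun h => hb'j h.symm) (by rw [neg_sq]; exact hs2)
        have horth₁ : B₁ (v k) (v j + s • v b') = 0 := by
          simp [map_add, map_smul, hortho k j hkj, hortho k b' hkb']
        have horth₂ : B₁ (v k) (v j + (-s) • v b') = 0 := by
          simp [map_add, map_smul, hortho k j hkj, hortho k b' hkb']
        have hp := P _ _ hk0 hiso₁ horth₁
        have hm := P _ _ hk0 hiso₂ horth₂
        simp only [map_add, map_smul, smul_eq_mul] at hp hm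
        linear_combination (hp + hm) / 2
    · -- B₁ nondegenerate diagonal: four-sign trick
      push_neg at hk
      have h0 : (0 : ℕ) < nn := by omega
      refine key (v ⟨0, h0⟩) (v.ne_zero _) fun j => ?_
      by_cases hj0 : j = ⟨0, h0⟩
      · subst hj0; exact h2 _
      · set i0 : Fin nn := ⟨0, h0⟩
        obtain ⟨b, e, hbe, hbi, hbj, hei, hej⟩ := fresh i0 j
        obtain ⟨s, hs⟩ := IsAlgClosed.exists_pow_nat_eq
          (-(B₁ (v i0) (v i0)) / (B₁ (v b) (v b))) two_pos
        obtain ⟨t, ht⟩ := IsAlgClosed.exists_pow_nat_eq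
          (-(B₁ (v j) (v j)) / (B₁ (v e) (v e))) two_pos
        have hs2 : s ^ 2 * B₁ (v b) (v b) = -(B₁ (v i0) (v i0)) := by
          rw [hs]; field_simp [hk b]
        have ht2 : t ^ 2 * B₁ (v e) (v e) = -(B₁ (v j) (v j)) := by
          rw [ht]; field_simp [hk e]
        have hij : i0 ≠ j := fun h => hj0 h.symm
        have hxp := mkiso i0 b s hbi.symm hs2
        have hxm := mkiso i0 b (-s) hbi.symm (by rw [neg_sq]; exact hs2)
        have hyp := mkiso j e t hej.symm ht2
        have hym := mkiso j e (-t) hej.symm (by rw [neg_sq]; exact ht2)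
        have o1 := mkorth i0 b j e s t hij (Ne.symm hei) hbj hbe
        have o2 := mkorth i0 b j e s (-t) hij (Ne.symm hei) hbj hbe
        have o3 := mkorth i0 b j e (-s) t hij (Ne.symm hei) hbj hbe
        have o4 := mkorth i0 b j e (-s) (-t) hij (Ne.symm hei) hbj hbe
        have q1 := P _ _ hxp hyp o1
        have q2 := P _ _ hxp hym o2
        have q3 := P _ _ hxm hyp o3
        have q4 := P _ _ hxm hym o4
        simp only [map_add, map_smul, LinearMap.add_apply, LinearMap.smul_apply,
          smul_eq_mul] at q1 q2 q3 q4
        linear_combination (q1 + q2 + q3 + q4) / 4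
  · -- rank ≤ 1
    push_neg at hS
    obtain ⟨j₀, hj₀⟩ : ∃ j₀ : Fin nn, ∀ j, j ≠ j₀ → B₁ (v j) (v j) = 0 := by
      by_cases hall : ∀ j : Fin nn, B₁ (v j) (v j) = 0
      · exact ⟨⟨0, by omega⟩, fun j _ => hall j⟩
      · push_neg at hall
        obtain ⟨a, ha⟩ := hall
        refine ⟨a, fun j hj => ?_⟩
        by_contra hdj
        exact ha (hS j a hj hdj)
    have hzero : ∀ a b : Fin nn, a ≠ j₀ → b ≠ j₀ → B₂ (v a) (v b) = 0 := by
      intro a b ha hb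
      by_cases hab : a = b
      · subst hab; exact h2 _
      · exact P _ _ (hj₀ a ha) (hj₀ b hb) (hortho a b hab)
    obtain ⟨a₁, a₂, ha12, ha1, -, ha2, -⟩ := fresh j₀ j₀
    by_cases hφ : B₂ (v a₁) (v j₀) = 0
    · refine key (v a₁) (v.ne_zero _) fun j => ?_
      by_cases hj : j = j₀
      · subst hj; exact hφ
      · exact hzero a₁ j ha1 hj
    · set z := B₂ (v a₂) (v j₀) • v a₁ - B₂ (v a₁) (v j₀) • v a₂ with hz
      have hzne : z ≠ 0 := by
        intro h0
        have := congrArg (fun w => v.repr w a₂) h0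
        simp only [hz, map_sub, map_smul, Module.Basis.repr_self, Finsupp.coe_sub, Finsupp.coe_smul,
          Pi.sub_apply, Pi.smul_apply, Finsupp.single_apply, if_neg ha12, if_pos rfl,
          smul_eq_mul, mul_zero, mul_one, zero_sub, map_zero, Finsupp.coe_zero,
          Pi.zero_apply, neg_eq_zero] at this
        exact hφ (by simpa using this)
      refine key z hzne fun j => ?_
      by_cases hj : j = j₀
      · subst hj
        simp only [hz, map_sub, map_smul, LinearMap.sub_apply, LinearMap.smul_apply, smul_eq_mul]
        ring
      · simp only [hz, map_sub, map_smul, LinearMap.sub_apply, LinearMap.smul_apply, smul_eq_mul,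
          hzero a₁ j ha1 hj, hzero a₂ j ha2 hj, mul_zero, sub_zero]
end

section
/- Let A ∈ o_n(K), K algebraically closed of characteristic 0, with rank(A) ≥ 4. Then there exists J ∈ o_n with rank(J) = 2, J² = 0, and rank(A - J) = rank(A) - 2. -/
open Module LinearMap

section Aux

variable {K V : Type*} [Field K] [IsAlgClosed K] [CharZero K]
  [AddCommGroup V] [Module K V] [FiniteDimensional K V]

/-- ratio of functionals -/
lemma funratio {M : Type*} [AddCommGroup M] [Module K M] (f g : M →ₗ[K] K)
    (h : ∀ x, g x = 0 → f x = 0) : ∃ c : K, ∀ x, f x = c * g x := by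
  by_cases hg : ∀ x, g x = 0
  · exact ⟨0, fun x => by rw [h x (hg x), zero_mul]⟩
  · push_neg at hg
    obtain ⟨m, hm⟩ := hg
    refine ⟨f m / g m, fun x => ?_⟩
    have h1 : g ((g m) • x - (g x) • m) = 0 := by
      simp [map_sub, map_smul, smul_eq_mul]; ring
    have h2 := h _ h1
    simp only [map_sub, map_smul, smul_eq_mul, sub_eq_zero] at h2
    field_simp
    linear_combination h2

/-- quadratic root -/
lemma quadroot (c₂ c₁ c₀ : K) (h : c₁ ≠ 0 ∨ c₂ ≠ 0) :
    ∃ t : K, c₂ * t ^ 2 + c₁ * t + c₀ = 0 := by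
  by_cases hc2 : c₂ = 0
  · have hc1 : c₁ ≠ 0 := h.resolve_right (by simp [hc2])
    refine ⟨-c₀ / c₁, ?_⟩
    rw [hc2, zero_mul, zero_add, mul_div_assoc', mul_div_cancel_left₀ _ hc1, neg_add_cancel]
  · obtain ⟨s, hs⟩ := IsAlgClosed.exists_pow_nat_eq (k := K) (c₁ ^ 2 - 4 * c₂ * c₀) (n := 2) (by norm_num)
    refine ⟨(s - c₁) / (2 * c₂), ?_⟩
    have h2 : (2 : K) ≠ 0 := two_ne_zero
    field_simp
    ring_nf
    linear_combination hs

end Aux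

open Module LinearMap

section Main

variable {K V : Type*} [Field K] [IsAlgClosed K] [CharZero K]
  [AddCommGroup V] [Module K V] [FiniteDimensional K V]
  {B : LinearMap.BilinForm K V} {A : V →ₗ[K] V}

lemma ortho_aux (hA : ∀ x y, B (A x) y = - B x (A y)) {l m : K} (hlm : l + m ≠ 0) :
    ∀ (N n p : ℕ) (x y : V), n + p ≤ N → ((A - l • (1 : Module.End K V)) ^ n) x = 0 →
      ((A - m • (1 : Module.End K V)) ^ p) y = 0 → B x y = 0 := by
  intro N
  induction N with
  | zero =>
    intro n p x y hnp hx hy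
    have hn : n = 0 := by omega
    subst hn
    simp only [pow_zero, Module.End.one_apply] at hx
    subst hx
    simp
  | succ N ih =>
    intro n p x y hnp hx hy
    match n, p with
    | 0, p =>
      simp only [pow_zero, Module.End.one_apply] at hx
      subst hx; simp
    | n + 1, 0 =>
      simp only [pow_zero, Module.End.one_apply] at hy
      subst hy; simp
    | n + 1, p + 1 =>
      have key : (l + m) * B x y
          = B (((l • (1 : Module.End K V)) - A) x) y + B x (((m • (1 : Module.End K V)) - A) y) := by
        simp only [LinearMap.sub_apply, LinearMap.smul_apply, Module.End.one_apply, map_sub,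
          map_smul, smul_eq_mul, LinearMap.sub_apply, LinearMap.smul_apply]
        linear_combination hA x y
      have e1 : ((l • (1 : Module.End K V)) - A) = -(A - l • 1) := by rw [neg_sub]
      have e2 : ((m • (1 : Module.End K V)) - A) = -(A - m • 1) := by rw [neg_sub]
      have hx' : ((A - l • (1 : Module.End K V)) ^ n) (((l • (1 : Module.End K V)) - A) x) = 0 := by
        rw [e1, LinearMap.neg_apply, map_neg, neg_eq_zero, ← Module.End.mul_apply, ← pow_succ]
        exact hx
      have hy' : ((A - m • (1 : Module.End K V)) ^ p) (((m • (1 : Module.End K V)) - A) y) = 0 := by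
        rw [e2, LinearMap.neg_apply, map_neg, neg_eq_zero, ← Module.End.mul_apply, ← pow_succ]
        exact hy
      have z1 : B (((l • (1 : Module.End K V)) - A) x) y = 0 :=
        ih n (p + 1) _ _ (by omega) hx' hy
      have z2 : B x (((m • (1 : Module.End K V)) - A) y) = 0 :=
        ih (n + 1) p _ _ (by omega) hx hy'
      have : (l + m) * B x y = 0 := by rw [key, z1, z2, add_zero]
      exact (mul_eq_zero.mp this).resolve_left hlm

lemma ortho (hA : ∀ x y, B (A x) y = - B x (A y)) {l m : K} (hlm : l + m ≠ 0) {x y : V}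
    (hx : x ∈ Module.End.maxGenEigenspace A l) (hy : y ∈ Module.End.maxGenEigenspace A m) :
    B x y = 0 := by
  rw [Module.End.mem_maxGenEigenspace] at hx hy
  obtain ⟨n, hn⟩ := hx
  obtain ⟨p, hp⟩ := hy
  exact ortho_aux hA hlm (n + p) n p x y le_rfl hn hp

lemma mem_A_inv {l : K} {x : V} (hx : x ∈ Module.End.maxGenEigenspace A l) :
    A x ∈ Module.End.maxGenEigenspace A l :=
  Module.End.mapsTo_maxGenEigenspace_of_comm (Commute.refl A) l hx

lemma left_nondeg (hB : B.Nondegenerate) (hA : ∀ x y, B (A x) y = - B x (A y)) {l : K} {x : V}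
    (hx : x ∈ Module.End.maxGenEigenspace A l)
    (h : ∀ q ∈ Module.End.maxGenEigenspace A (-l), B x q = 0) : x = 0 := by
  apply hB.1 x
  intro y
  have hy : y ∈ (⊤ : Submodule K V) := Submodule.mem_top
  rw [← Module.End.iSup_maxGenEigenspace_eq_top (A : Module.End K V)] at hy
  have hle : (⨆ μ : K, Module.End.maxGenEigenspace A μ) ≤ LinearMap.ker (B x) := by
    apply iSup_le
    intro μ q hq
    rw [LinearMap.mem_ker]
    by_cases hμ : μ = -l
    · exact h q (hμ ▸ hq)
    · exact ortho hA (fun hc => hμ (by linear_combination hc)) hx hq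
  exact LinearMap.mem_ker.mp (hle hy)

lemma realize1 (hB : B.Nondegenerate) (hA : ∀ x y, B (A x) y = - B x (A y)) {l : K} {a : V}
    (ha : a ∈ Module.End.maxGenEigenspace A l) (hane : a ≠ 0) (β : K) :
    ∃ b ∈ Module.End.maxGenEigenspace A (-l), B a b = β := by
  have h1 : ∃ b ∈ Module.End.maxGenEigenspace A (-l), B a b ≠ 0 := by
    by_contra hcon
    push_neg at hcon
    exact hane (left_nondeg hB hA ha hcon)
  obtain ⟨b, hb, hbne⟩ := h1
  refine ⟨(β / B a b) • b, Submodule.smul_mem _ _ hb, ?_⟩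
  rw [map_smul, smul_eq_mul]
  field_simp

lemma realize2 (hB : B.Nondegenerate) (hA : ∀ x y, B (A x) y = - B x (A y)) {l : K} {p p₁ : V}
    (hp : p ∈ Module.End.maxGenEigenspace A l) (hp₁ : p₁ ∈ Module.End.maxGenEigenspace A l)
    (hindep : ∀ a b : K, a • p + b • p₁ = 0 → a = 0 ∧ b = 0) (β₀ β₁ : K) :
    ∃ q ∈ Module.End.maxGenEigenspace A (-l), B p q = β₀ ∧ B p₁ q = β₁ := by
  have main : ∀ u w : V, u ∈ Module.End.maxGenEigenspace A l →
      w ∈ Module.End.maxGenEigenspace A l → (∀ a b : K, a • u + b • w = 0 → a = 0 ∧ b = 0) →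
      ∃ q ∈ Module.End.maxGenEigenspace A (-l), B u q = 1 ∧ B w q = 0 := by
    intro u w hu hw hind
    set N := Module.End.maxGenEigenspace A (-l)
    by_cases hker : ∀ x : N, B w (x : V) = 0 → B u (x : V) = 0
    · exfalso
      obtain ⟨c, hc⟩ := funratio ((B u).comp N.subtype) ((B w).comp N.subtype) (by
        intro x hx
        exact hker x hx)
      have hz : u - c • w = 0 := by
        apply left_nondeg hB hA (Submodule.sub_mem _ hu (Submodule.smul_mem _ _ hw))
        intro q hq
        have := hc ⟨q, hq⟩
        simp only [LinearMap.comp_apply, Submodule.subtype_apply] at this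
        simp only [map_sub, map_smul, LinearMap.sub_apply, LinearMap.smul_apply, smul_eq_mul]
        rw [this]; ring
      have : (1 : K) • u + (-c) • w = 0 := by
        rw [one_smul, neg_smul, ← sub_eq_add_neg]; exact hz
      exact one_ne_zero (hind 1 (-c) this).1
    · push_neg at hker
      obtain ⟨x, hx0, hxne⟩ := hker
      refine ⟨(1 / B u (x : V)) • (x : V), Submodule.smul_mem _ _ x.2, ?_, ?_⟩
      · rw [map_smul, smul_eq_mul]; field_simp
      · rw [map_smul, smul_eq_mul, hx0, mul_zero]
  obtain ⟨q₀, hq₀, hq₀1, hq₀0⟩ := main p p₁ hp hp₁ hindep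
  obtain ⟨q₁, hq₁, hq₁1, hq₁0⟩ := main p₁ p hp₁ hp (by
    intro a b hab
    have := hindep b a (by rw [add_comm]; exact hab)
    exact ⟨this.2, this.1⟩)
  refine ⟨β₀ • q₀ + β₁ • q₁, Submodule.add_mem _ (Submodule.smul_mem _ _ hq₀)
    (Submodule.smul_mem _ _ hq₁), ?_, ?_⟩
  · simp only [map_add, map_smul, smul_eq_mul, hq₀1, hq₁0]; ring
  · simp only [map_add, map_smul, smul_eq_mul, hq₀0, hq₁1]; ring

lemma caseN (hB : B.Nondegenerate) (hsymm : ∀ x y, B x y = B y x)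
    (hA : ∀ x y, B (A x) y = - B x (A y))
    (hrk : 4 ≤ Module.finrank K (LinearMap.range A))
    (u x₀ : V) (hx₀ : A x₀ = u) (hu : u ≠ 0) (hAu : A u = 0) :
    ∃ p q : V, B (A p) (A p) = 0 ∧ B (A q) (A q) = 0 ∧ B (A p) (A q) = 0 ∧ B (A p) q = 1 := by
  have huA : ∀ z : V, B u (A z) = 0 := by
    intro z
    have h := hA u z
    rw [hAu] at h
    simpa using h.symm
  have hy₀ex : ∃ y₀ : V, B u y₀ = 1 := by
    have hne : ∃ y, B u y ≠ 0 := by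
      by_contra hcon
      push_neg at hcon
      exact hu (hB.1 u hcon)
    obtain ⟨y, hy⟩ := hne
    exact ⟨(1 / B u y) • y, by rw [map_smul, smul_eq_mul]; field_simp⟩
  obtain ⟨y₀, hy₀⟩ := hy₀ex
  by_cases hq : ∃ y, B u y = 1 ∧ B (A y) (A y) = 0
  · obtain ⟨y, hy1, hy2⟩ := hq
    have h00 : B u u = 0 := by
      have h := huA x₀
      rwa [hx₀] at h
    refine ⟨x₀, y, ?_, hy2, ?_, ?_⟩ <;> rw [hx₀]
    · exact h00
    · exact huA y
    · exact hy1
  · push_neg at hq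
    have hcne : B (A y₀) (A y₀) ≠ 0 := hq y₀ hy₀
    -- Step H1
    have H1 : ∀ w : V, B u w = 0 → B (A y₀) (A w) = 0 ∧ B (A w) (A w) = 0 := by
      intro w hw0
      have key : ¬ (2 * B (A y₀) (A w) ≠ 0 ∨ B (A w) (A w) ≠ 0) := by
        intro hcoef
        obtain ⟨t, ht⟩ := quadroot (B (A w) (A w)) (2 * B (A y₀) (A w)) (B (A y₀) (A y₀)) hcoef
        apply hq (y₀ + t • w)
        · rw [map_add, map_smul, smul_eq_mul, hy₀, hw0, mul_zero, add_zero]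
        · have hsym' := hsymm (A w) (A y₀)
          simp only [map_add, map_smul, LinearMap.add_apply, LinearMap.smul_apply, smul_eq_mul]
          linear_combination ht + t * hsym'
      push_neg at key
      obtain ⟨k1, k2⟩ := key
      exact ⟨(mul_eq_zero.mp k1).resolve_left two_ne_zero, k2⟩
    -- Step H2
    have H2 : ∀ z w : V, B (A z) (A w) = B (A y₀) (A y₀) * (B u z * B u w) := by
      intro z w
      have hz0 : B u (z - B u z • y₀) = 0 := by
        rw [map_sub, map_smul, smul_eq_mul, hy₀, mul_one, sub_self]
      have hw0 : B u (w - B u w • y₀) = 0 := by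
        rw [map_sub, map_smul, smul_eq_mul, hy₀, mul_one, sub_self]
      obtain ⟨hz1, hz2⟩ := H1 _ hz0
      obtain ⟨hw1, hw2⟩ := H1 _ hw0
      have hsum0 : B u ((z - B u z • y₀) + (w - B u w • y₀)) = 0 := by
        rw [map_add, hz0, hw0, add_zero]
      obtain ⟨-, hs2⟩ := H1 _ hsum0
      simp only [map_add, LinearMap.add_apply] at hs2
      have hsymzw := hsymm (A (w - B u w • y₀)) (A (z - B u z • y₀))
      have hcross : B (A (z - B u z • y₀)) (A (w - B u w • y₀)) = 0 := by
        linear_combination (1/2 : K) * hs2 - (1/2 : K) * hz2 - (1/2 : K) * hw2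
          - (1/2 : K) * hsymzw
      have hz1' : B (A (z - B u z • y₀)) (A y₀) = 0 := by
        rw [hsymm]; exact hz1
      have ez : A z = B u z • A y₀ + A (z - B u z • y₀) := by
        rw [map_sub, map_smul]; abel
      have ew : A w = B u w • A y₀ + A (w - B u w • y₀) := by
        rw [map_sub, map_smul]; abel
      rw [ez, ew]
      simp only [map_add, map_smul, LinearMap.add_apply, LinearMap.smul_apply, smul_eq_mul]
      linear_combination (B u z) * hw1 + (B u w) * hz1' + hcross
    -- Step H4
    have H4 : ∃ x' : V, B u x' = 0 ∧ ¬ ∃ k : K, A x' = k • u := by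
      by_contra hcon
      push_neg at hcon
      set φ : K × K →ₗ[K] V :=
        (LinearMap.fst K K K).smulRight u + (LinearMap.snd K K K).smulRight (A y₀) with hφ
      have hrange : LinearMap.range A ≤ LinearMap.range φ := by
        rintro _ ⟨z, rfl⟩
        have hz0 : B u (z - B u z • y₀) = 0 := by
          rw [map_sub, map_smul, smul_eq_mul, hy₀, mul_one, sub_self]
        obtain ⟨k, hk⟩ := hcon (z - B u z • y₀) hz0
        refine ⟨(k, B u z), ?_⟩
        have ez : A z = B u z • A y₀ + A (z - B u z • y₀) := by
          rw [map_sub, map_smul]; abel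
        rw [ez, hk]
        simp [hφ]
        abel
      have hle : Module.finrank K (LinearMap.range A) ≤ 2 := by
        calc Module.finrank K (LinearMap.range A) ≤ Module.finrank K (LinearMap.range φ) :=
              Submodule.finrank_mono hrange
          _ ≤ Module.finrank K (K × K) := LinearMap.finrank_range_le φ
          _ = 2 := by simp [Module.finrank_prod]
      omega
    obtain ⟨x', hx'0, hx'ne⟩ := H4
    have hy'ex : ∃ y', B u y' = 0 ∧ B (A x') y' = 1 := by
      by_cases hk : ∀ y, B u y = 0 → B (A x') y = 0
      · exfalso
        obtain ⟨k, hkk⟩ := funratio (B (A x')) (B u) hk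
        apply hx'ne
        refine ⟨k, ?_⟩
        have hz : ∀ y, B (A x' - k • u) y = 0 := by
          intro y
          simp only [map_sub, map_smul, LinearMap.sub_apply, LinearMap.smul_apply, smul_eq_mul]
          rw [hkk y]; ring
        have := hB.1 _ hz
        rwa [sub_eq_zero] at this
      · push_neg at hk
        obtain ⟨y, h1, h2⟩ := hk
        exact ⟨(1 / B (A x') y) • y,
          by rw [map_smul, smul_eq_mul, h1, mul_zero],
          by rw [map_smul, smul_eq_mul]; field_simp⟩
    obtain ⟨y', hy'0, hy'1⟩ := hy'ex
    refine ⟨x', y', ?_, ?_, ?_, hy'1⟩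
    · rw [H2, hx'0]; ring
    · rw [H2, hy'0]; ring
    · rw [H2, hx'0]; ring

lemma kill_high {T : Module.End K V} {x : V} {m j : ℕ} (h : (T ^ m) x = 0) (hmj : m ≤ j) :
    (T ^ j) x = 0 := by
  obtain ⟨d, rfl⟩ := Nat.exists_eq_add_of_le hmj
  rw [add_comm, pow_add, Module.End.mul_apply, h, map_zero]

lemma nil_of_pow (hS : ∀ w : V, w ∈ LinearMap.range A → A w = 0 → w = 0) :
    ∀ (x : V) (k : ℕ), (A ^ k) x = 0 → A x = 0 := by
  intro x k hk
  classical
  by_contra hax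
  have hexm : ∃ m, (A ^ m) x = 0 := ⟨k, hk⟩
  have hspec : (A ^ Nat.find hexm) x = 0 := Nat.find_spec hexm
  set m := Nat.find hexm with hm
  have hm0 : m ≠ 0 := by
    intro h0
    rw [h0, pow_zero, Module.End.one_apply] at hspec
    exact hax (by rw [hspec, map_zero])
  have hm1 : m ≠ 1 := by
    intro h1
    rw [h1, pow_one] at hspec
    exact hax hspec
  have hmin : (A ^ (m - 1)) x ≠ 0 := Nat.find_min hexm (by omega)
  have h21 : (m - 2) + 1 = m - 1 := by omega
  have h11 : (m - 1) + 1 = m := by omega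
  have hw_range : (A ^ (m - 1)) x ∈ LinearMap.range A :=
    ⟨(A ^ (m - 2)) x, by rw [← Module.End.mul_apply, ← pow_succ', h21]⟩
  have hAw : A ((A ^ (m - 1)) x) = 0 := by
    rw [← Module.End.mul_apply, ← pow_succ', h11]
    exact hspec
  exact hmin (hS _ hw_range hAw)

lemma key (hB : B.Nondegenerate) (hsymm : ∀ x y, B x y = B y x)
    (hA : ∀ x y, B (A x) y = - B x (A y))
    (hrk : 4 ≤ Module.finrank K (LinearMap.range A)) :
    ∃ p q : V, B (A p) (A p) = 0 ∧ B (A q) (A q) = 0 ∧ B (A p) (A q) = 0 ∧ B (A p) q = 1 := by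
  by_cases hN : ∃ u, u ∈ LinearMap.range A ∧ u ≠ 0 ∧ A u = 0
  · obtain ⟨u, ⟨x₀, hx₀⟩, hu, hAu⟩ := hN
    exact caseN hB hsymm hA hrk u x₀ hx₀ hu hAu
  · push_neg at hN
    have hS : ∀ w : V, w ∈ LinearMap.range A → A w = 0 → w = 0 := by
      intro w hw hAw
      by_contra hne
      exact hN w hw hne hAw
    have hnil : ∀ (x : V) (k : ℕ), (A ^ k) x = 0 → A x = 0 := nil_of_pow hS
    -- there is a nonzero eigenvalue-like κ
    have hex : ∃ κ : K, κ ≠ 0 ∧ Module.End.maxGenEigenspace A κ ≠ ⊥ := by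
      by_contra hcon
      push_neg at hcon
      have hA0 : ∀ x : V, A x = 0 := by
        intro x
        have hx : x ∈ (⊤ : Submodule K V) := Submodule.mem_top
        rw [← Module.End.iSup_maxGenEigenspace_eq_top (A : Module.End K V)] at hx
        have hle : (⨆ μ : K, Module.End.maxGenEigenspace A μ)
            ≤ Module.End.maxGenEigenspace A 0 := by
          apply iSup_le
          intro μ
          by_cases hμ : μ = 0
          · subst hμ; exact le_rfl
          · rw [hcon μ hμ]; exact bot_le
        have hx0 := hle hx
        rw [Module.End.mem_maxGenEigenspace] at hx0
        obtain ⟨k, hk⟩ := hx0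
        simp only [zero_smul, sub_zero] at hk
        exact hnil x k hk
      have hbot : LinearMap.range A = ⊥ := LinearMap.range_eq_bot.mpr (LinearMap.ext hA0)
      rw [hbot] at hrk
      simp at hrk
    obtain ⟨κ, hκ0, hκbot⟩ := hex
    by_cases hchain : ∃ μ : K, μ ≠ 0 ∧ ∃ x ∈ Module.End.maxGenEigenspace A μ,
        (A - μ • (1 : Module.End K V)) x ≠ 0
    · -- Case S-I : a genuine Jordan chain at a nonzero eigenvalue
      classical
      obtain ⟨μ, hμ0, x, hxE, hxne⟩ := hchain
      rw [Module.End.mem_maxGenEigenspace] at hxE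
      set T := A - μ • (1 : Module.End K V) with hT
      have hexm : ∃ k, (T ^ k) x = 0 := hxE
      have hspec : (T ^ Nat.find hexm) x = 0 := Nat.find_spec hexm
      set m := Nat.find hexm with hm
      have hm0 : m ≠ 0 := by
        intro h0
        rw [h0, pow_zero, Module.End.one_apply] at hspec
        exact hxne (by rw [hspec, map_zero])
      have hm1 : m ≠ 1 := by
        intro h1
        rw [h1, pow_one] at hspec
        exact hxne hspec
      set p := (T ^ (m - 2)) x with hp
      set p₁ := (T ^ (m - 1)) x with hp₁
      have h21 : (m - 2) + 1 = m - 1 := by omega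
      have h11 : (m - 1) + 1 = m := by omega
      have hTp : T p = p₁ := by
        rw [hp, hp₁, ← Module.End.mul_apply, ← pow_succ', h21]
      have hTp₁ : T p₁ = 0 := by
        rw [hp₁, ← Module.End.mul_apply, ← pow_succ', h11]
        exact hspec
      have hp₁ne : p₁ ≠ 0 := Nat.find_min hexm (by omega)
      have hpE : p ∈ Module.End.maxGenEigenspace A μ := by
        rw [Module.End.mem_maxGenEigenspace]
        refine ⟨2, ?_⟩
        rw [← hT, hp, ← Module.End.mul_apply, ← pow_add]
        have h2m : 2 + (m - 2) = m := by omega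
        rw [h2m]
        exact hspec
      have hp₁E : p₁ ∈ Module.End.maxGenEigenspace A μ := by
        rw [Module.End.mem_maxGenEigenspace]
        refine ⟨1, ?_⟩
        rw [← hT, pow_one]
        exact hTp₁
      have hAp : A p = μ • p + p₁ := by
        have h' : A p - μ • p = p₁ := by simpa [hT] using hTp
        rw [← h']; abel
      have hAp₁ : A p₁ = μ • p₁ := by
        have h' : A p₁ - μ • p₁ = 0 := by simpa [hT] using hTp₁
        rwa [sub_eq_zero] at h'
      have hindep : ∀ s t : K, s • p + t • p₁ = 0 → s = 0 ∧ t = 0 := by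
        intro s t hst
        have h1 : s • p₁ = 0 := by
          have := congrArg T hst
          simpa [map_add, map_smul, hTp, hTp₁, smul_zero, add_zero] using this
        have hs : s = 0 := by
          rcases smul_eq_zero.mp h1 with h | h
          · exact h
          · exact absurd h hp₁ne
        subst hs
        rw [zero_smul, zero_add] at hst
        have ht : t = 0 := by
          rcases smul_eq_zero.mp hst with h | h
          · exact h
          · exact absurd h hp₁ne
        exact ⟨rfl, ht⟩
      obtain ⟨q, hqE, hq0, hq1⟩ := realize2 hB hA hpE hp₁E hindep (2 / μ) (-1)
      have h2μ : μ + μ ≠ 0 := fun hc => hμ0 (by linear_combination (1/2 : K) * hc)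
      have h2μ' : (-μ) + (-μ) ≠ 0 := fun hc => hμ0 (by linear_combination (-1/2 : K) * hc)
      have c1 : B (A p) q = 1 := by
        rw [hAp]
        simp only [map_add, map_smul, LinearMap.add_apply, LinearMap.smul_apply, smul_eq_mul]
        rw [hq0, hq1]
        field_simp
        norm_num
      have c2 : B (A p₁) q = -μ := by
        rw [hAp₁]
        simp only [map_smul, LinearMap.smul_apply, smul_eq_mul]
        rw [hq1]
        ring
      have d1 : B p (A q) = -1 := by
        have h' := hA p q
        rw [c1] at h'
        linear_combination h'
      have d2 : B p₁ (A q) = μ := by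
        have h' := hA p₁ q
        rw [c2] at h'
        linear_combination h'
      refine ⟨p, q, ?_, ?_, ?_, c1⟩
      · exact ortho hA h2μ (mem_A_inv hpE) (mem_A_inv hpE)
      · exact ortho hA h2μ' (mem_A_inv hqE) (mem_A_inv hqE)
      · rw [hAp]
        simp only [map_add, map_smul, LinearMap.add_apply, LinearMap.smul_apply, smul_eq_mul]
        rw [d1, d2]
        ring
    · push_neg at hchain
      have heig : ∀ (μ : K), μ ≠ 0 → ∀ x ∈ Module.End.maxGenEigenspace A μ, A x = μ • x := by
        intro μ hμ x hx
        have h' := hchain μ hμ x hx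
        rw [LinearMap.sub_apply, LinearMap.smul_apply, Module.End.one_apply, sub_eq_zero] at h'
        exact h'
      by_cases hbig : ∃ μ : K, μ ≠ 0 ∧ ∃ a c : V, a ∈ Module.End.maxGenEigenspace A μ ∧
          c ∈ Module.End.maxGenEigenspace A μ ∧ ∀ s t : K, s • a + t • c = 0 → s = 0 ∧ t = 0
      · -- Case S-IIa
        obtain ⟨μ, hμ0, a, c, haE, hcE, hindep⟩ := hbig
        have hμ2 : μ + μ ≠ 0 := fun hc => hμ0 (by linear_combination (1/2 : K) * hc)
        have hμ2' : (-μ) + (-μ) ≠ 0 := fun hc => hμ0 (by linear_combination (-1/2 : K) * hc)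
        obtain ⟨b, hbE, hb1, hb2⟩ := realize2 hB hA haE hcE hindep 0 (-1/(2*μ))
        obtain ⟨d, hdE, hd1, hd2⟩ := realize2 hB hA haE hcE hindep (1/(2*μ)) 0
        have hAa : A a = μ • a := heig μ hμ0 a haE
        have hAc : A c = μ • c := heig μ hμ0 c hcE
        have hAb : A b = -(μ • b) := by
          have h' := heig (-μ) (neg_ne_zero.mpr hμ0) b hbE
          rwa [neg_smul] at h'
        have hAd : A d = -(μ • d) := by
          have h' := heig (-μ) (neg_ne_zero.mpr hμ0) d hdE
          rwa [neg_smul] at h'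
        have oaa : B a a = 0 := ortho hA hμ2 haE haE
        have oac : B a c = 0 := ortho hA hμ2 haE hcE
        have occ : B c c = 0 := ortho hA hμ2 hcE hcE
        have obb : B b b = 0 := ortho hA hμ2' hbE hbE
        have obd : B b d = 0 := ortho hA hμ2' hbE hdE
        have odd : B d d = 0 := ortho hA hμ2' hdE hdE
        have oba : B b a = 0 := by rw [hsymm]; exact hb1
        have odc : B d c = 0 := by rw [hsymm]; exact hd2
        have obc : B b c = -1/(2*μ) := by rw [hsymm]; exact hb2
        have oda : B d a = 1/(2*μ) := by rw [hsymm]; exact hd1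
        have oca : B c a = 0 := by rw [hsymm]; exact oac
        have odb : B d b = 0 := by rw [hsymm]; exact obd
        have eab : A (a + b) = μ • a + -(μ • b) := by rw [map_add, hAa, hAb]
        have ecd : A (c + d) = μ • c + -(μ • d) := by rw [map_add, hAc, hAd]
        refine ⟨a + b, c + d, ?_, ?_, ?_, ?_⟩
        · rw [eab]
          simp only [map_add, map_sub, map_smul, map_neg, LinearMap.add_apply,
            LinearMap.sub_apply, LinearMap.neg_apply, LinearMap.smul_apply, smul_eq_mul]
          rw [oaa, obb, hb1, oba]
          ring
        · rw [ecd]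
          simp only [map_add, map_sub, map_smul, map_neg, LinearMap.add_apply,
            LinearMap.sub_apply, LinearMap.neg_apply, LinearMap.smul_apply, smul_eq_mul]
          rw [occ, odd, hd2, odc]
          ring
        · rw [eab, ecd]
          simp only [map_add, map_sub, map_smul, map_neg, LinearMap.add_apply,
            LinearMap.sub_apply, LinearMap.neg_apply, LinearMap.smul_apply, smul_eq_mul]
          rw [oac, hd1, obc, obd]
          ring
        · rw [eab]
          simp only [map_add, map_sub, map_smul, map_neg, LinearMap.add_apply,
            LinearMap.sub_apply, LinearMap.neg_apply, LinearMap.smul_apply, smul_eq_mul]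
          rw [oac, hd1, obc, obd]
          field_simp
          ring
      · push_neg at hbig
        by_cases hsecond : ∃ ν : K, ν ≠ 0 ∧ ν ≠ κ ∧ ν ≠ -κ ∧
            Module.End.maxGenEigenspace A ν ≠ ⊥
        · -- Case S-IIb : two distinct pairs of eigenvalues
          obtain ⟨ν, hν0, hνκ, hνκ', hνbot⟩ := hsecond
          obtain ⟨a, haE, hane⟩ := Submodule.exists_mem_ne_zero_of_ne_bot hκbot
          obtain ⟨c, hcE, hcne⟩ := Submodule.exists_mem_ne_zero_of_ne_bot hνbot
          have hκν : κ - ν ≠ 0 := sub_ne_zero.mpr (Ne.symm hνκ)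
          obtain ⟨b, hbE, hbv⟩ := realize1 hB hA haE hane (-ν/(κ*(κ-ν)))
          obtain ⟨d, hdE, hdv⟩ := realize1 hB hA hcE hcne (κ/(ν*(κ-ν)))
          have hAa : A a = κ • a := heig κ hκ0 a haE
          have hAc : A c = ν • c := heig ν hν0 c hcE
          have hAb : A b = -(κ • b) := by
            have h' := heig (-κ) (neg_ne_zero.mpr hκ0) b hbE
            rwa [neg_smul] at h'
          have hAd : A d = -(ν • d) := by
            have h' := heig (-ν) (neg_ne_zero.mpr hν0) d hdE
            rwa [neg_smul] at h'
          have s1 : κ + κ ≠ 0 := fun hc => hκ0 (by linear_combination (1/2 : K) * hc)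
          have s2 : ν + ν ≠ 0 := fun hc => hν0 (by linear_combination (1/2 : K) * hc)
          have s3 : κ + ν ≠ 0 := fun hc => hνκ' (by linear_combination hc)
          have s4 : (-κ) + (-κ) ≠ 0 := fun hc => hκ0 (by linear_combination (-1/2 : K) * hc)
          have s5 : (-ν) + (-ν) ≠ 0 := fun hc => hν0 (by linear_combination (-1/2 : K) * hc)
          have s6 : (-κ) + (-ν) ≠ 0 := fun hc => hνκ' (by linear_combination -hc)
          have s7 : κ + (-ν) ≠ 0 := fun hc => hνκ (by linear_combination -hc)
          have s8 : ν + (-κ) ≠ 0 := fun hc => hνκ (by linear_combination hc)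
          have oaa : B a a = 0 := ortho hA s1 haE haE
          have oac : B a c = 0 := ortho hA s3 haE hcE
          have oca : B c a = 0 := by rw [hsymm]; exact oac
          have occ : B c c = 0 := ortho hA s2 hcE hcE
          have obb : B b b = 0 := ortho hA s4 hbE hbE
          have obd : B b d = 0 := ortho hA s6 hbE hdE
          have odb : B d b = 0 := by rw [hsymm]; exact obd
          have odd : B d d = 0 := ortho hA s5 hdE hdE
          have oad : B a d = 0 := ortho hA s7 haE hdE
          have ocb : B c b = 0 := ortho hA s8 hcE hbE
          have oba : B b a = -ν/(κ*(κ-ν)) := by rw [hsymm]; exact hbv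
          have odc : B d c = κ/(ν*(κ-ν)) := by rw [hsymm]; exact hdv
          have eac : A (a + c) = κ • a + ν • c := by rw [map_add, hAa, hAc]
          have ebd : A (b + d) = -(κ • b) + -(ν • d) := by rw [map_add, hAb, hAd]
          refine ⟨a + c, b + d, ?_, ?_, ?_, ?_⟩
          · rw [eac]
            simp only [map_add, map_smul, LinearMap.add_apply, LinearMap.smul_apply, smul_eq_mul]
            rw [oaa, oac, oca, occ]
            ring
          · rw [ebd]
            simp only [map_add, map_neg, map_smul, LinearMap.add_apply, LinearMap.neg_apply,
              LinearMap.smul_apply, smul_eq_mul]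
            rw [obb, obd, odb, odd]
            ring
          · rw [eac, ebd]
            simp only [map_add, map_neg, map_smul, LinearMap.add_apply, LinearMap.neg_apply,
              LinearMap.smul_apply, smul_eq_mul]
            rw [hbv, oad, ocb, hdv]
            field_simp
            ring
          · rw [eac]
            simp only [map_add, map_smul, LinearMap.add_apply, LinearMap.smul_apply, smul_eq_mul]
            rw [hbv, oad, ocb, hdv]
            field_simp
            ring
        · -- Case S-IIc : impossible, rank would be at most 2
          exfalso
          push_neg at hsecond
          have hsmallrank : ∀ μ : K, μ ≠ 0 →
              Module.finrank K (Module.End.maxGenEigenspace A μ) ≤ 1 := by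
            intro μ hμ
            by_contra hgt
            push_neg at hgt
            have hpos : 0 < Module.finrank K (Module.End.maxGenEigenspace A μ) := by omega
            have hnbot : Module.End.maxGenEigenspace A μ ≠ ⊥ := by
              intro hb
              rw [hb, finrank_bot] at hpos
              omega
            obtain ⟨x, hxE, hxne⟩ := Submodule.exists_mem_ne_zero_of_ne_bot hnbot
            have hspan_le : (K ∙ x) ≤ Module.End.maxGenEigenspace A μ := by
              rwa [Submodule.span_singleton_le_iff_mem]
            have hne : (K ∙ x) ≠ Module.End.maxGenEigenspace A μ := by
              intro h
              have h1 := finrank_span_singleton (K := K) hxne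
              rw [h] at h1
              omega
            obtain ⟨y, hyE, hynot⟩ := SetLike.exists_of_lt (lt_of_le_of_ne hspan_le hne)
            obtain ⟨s, t, hst, hnst⟩ := hbig μ hμ x y hxE hyE
            by_cases ht : t = 0
            · subst ht
              rw [zero_smul, add_zero] at hst
              rcases smul_eq_zero.mp hst with h | h
              · exact hnst h rfl
              · exact hxne h
            · apply hynot
              rw [Submodule.mem_span_singleton]
              refine ⟨-(s/t), ?_⟩
              have h1 : t • y = -(s • x) := by
                rw [← sub_eq_zero, sub_neg_eq_add, add_comm]
                exact hst
              have h2 : y = t⁻¹ • (t • y) := by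
                rw [smul_smul, inv_mul_cancel₀ ht, one_smul]
              rw [h2, h1, smul_neg, smul_smul, ← neg_smul]
              congr 1
              ring
          have hE0 : Module.End.maxGenEigenspace A 0 ≤ LinearMap.ker A := by
            intro x hx
            rw [Module.End.mem_maxGenEigenspace] at hx
            obtain ⟨k, hk⟩ := hx
            simp only [zero_smul, sub_zero] at hk
            exact LinearMap.mem_ker.mpr (hnil x k hk)
          have htop : (⊤ : Submodule K V) ≤ LinearMap.ker A ⊔
              (Module.End.maxGenEigenspace A κ ⊔ Module.End.maxGenEigenspace A (-κ)) := by
            rw [← Module.End.iSup_maxGenEigenspace_eq_top (A : Module.End K V)]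
            apply iSup_le
            intro ν
            by_cases h0 : ν = 0
            · subst h0; exact le_trans hE0 le_sup_left
            by_cases h1 : ν = κ
            · subst h1; exact le_trans le_sup_left le_sup_right
            by_cases h2 : ν = -κ
            · subst h2; exact le_trans le_sup_right le_sup_right
            rw [hsecond ν h0 h1 h2]
            exact bot_le
          have hsup : ∀ (X Y : Submodule K V),
              Module.finrank K ↥(X ⊔ Y) ≤ Module.finrank K X + Module.finrank K Y := by
            intro X Y
            have h' := Submodule.finrank_sup_add_finrank_inf_eq X Y
            omega
          have e1 : Module.finrank K V = Module.finrank K (⊤ : Submodule K V) :=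
            (finrank_top K V).symm
          have e2 := Submodule.finrank_mono htop
          have e3 := hsup (LinearMap.ker A)
            (Module.End.maxGenEigenspace A κ ⊔ Module.End.maxGenEigenspace A (-κ))
          have e4 := hsup (Module.End.maxGenEigenspace A κ) (Module.End.maxGenEigenspace A (-κ))
          have e5 := hsmallrank κ hκ0
          have e6 := hsmallrank (-κ) (neg_ne_zero.mpr hκ0)
          have hrn := LinearMap.finrank_range_add_finrank_ker A
          omega

end Main

/-- Rank reduction in o_n by an element of the minimal orbit. -/
theorem stmt13 {K V : Type*} [Field K] [IsAlgClosed K] [CharZero K]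
    [AddCommGroup V] [Module K V] [FiniteDimensional K V]
    (B : LinearMap.BilinForm K V) (hB : B.Nondegenerate)
    (hsymm : ∀ x y, B x y = B y x)
    (A : V →ₗ[K] V) (hA : ∀ x y, B (A x) y = - B x (A y))
    (hrk : 4 ≤ Module.finrank K (LinearMap.range A)) :
    ∃ J : V →ₗ[K] V, (∀ x y, B (J x) y = - B x (J y)) ∧
      Module.finrank K (LinearMap.range J) = 2 ∧ J ∘ₗ J = 0 ∧
      Module.finrank K (LinearMap.range (A - J)) =
        Module.finrank K (LinearMap.range A) - 2 := by
  obtain ⟨p, q, h1, h2, h3, h4⟩ := key hB hsymm hA hrk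
  set u := A p with hu
  set v := A q with hv
  have huu : B u u = 0 := h1
  have hvv : B v v = 0 := h2
  have huv : B u v = 0 := h3
  have hvu : B v u = 0 := by rw [hsymm]; exact h3
  have huq : B u q = 1 := h4
  have hup : B u p = 0 := by
    linear_combination (1/2 : K) * hA p p + (1/2 : K) * hsymm (A p) p
  have hvq : B v q = 0 := by
    linear_combination (1/2 : K) * hA q q + (1/2 : K) * hsymm (A q) q
  have hvp : B v p = -1 := by
    linear_combination hA q p - hsymm q (A p) - h4
  have hker : ∀ x : V, A x = 0 → B u x = 0 ∧ B v x = 0 := by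
    intro x hx
    constructor
    · have h' := hA x p
      rw [hx, map_zero] at h'
      have hxu : B x (A p) = 0 := by simpa using h'.symm
      rw [hsymm]; exact hxu
    · have h' := hA x q
      rw [hx, map_zero] at h'
      have hxv : B x (A q) = 0 := by simpa using h'.symm
      rw [hsymm]; exact hxv
  set J : V →ₗ[K] V := (B u).smulRight v - (B v).smulRight u with hJ
  have hJapp : ∀ x, J x = (B u x) • v - (B v x) • u := by
    intro x
    simp [hJ, LinearMap.sub_apply, LinearMap.smulRight_apply]
  have hskew : ∀ x y, B (J x) y = - B x (J y) := by
    intro x y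
    rw [hJapp x, hJapp y]
    simp only [map_sub, map_smul, LinearMap.sub_apply, LinearMap.smul_apply, smul_eq_mul]
    have e1 : B x v = B v x := hsymm x v
    have e2 : B x u = B u x := hsymm x u
    linear_combination (B u y) * e1 - (B v y) * e2
  have hJJ : J ∘ₗ J = 0 := by
    apply LinearMap.ext
    intro x
    rw [LinearMap.comp_apply, LinearMap.zero_apply, hJapp x,
      hJapp ((B u) x • v - (B v) x • u)]
    have b1 : B u ((B u) x • v - (B v) x • u) = 0 := by
      rw [map_sub, map_smul, map_smul, huv, huu]; simp
    have b2 : B v ((B u) x • v - (B v) x • u) = 0 := by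
      rw [map_sub, map_smul, map_smul, hvv, hvu]; simp
    rw [b1, b2]
    simp
  have hJp : J p = u := by
    rw [hJapp, hup, hvp]
    simp
  have hJq : J q = v := by
    rw [hJapp, huq, hvq]
    simp
  set φ : K × K →ₗ[K] V :=
    (LinearMap.fst K K K).smulRight u + (LinearMap.snd K K K).smulRight v with hφ
  have hφapp : ∀ st : K × K, φ st = st.1 • u + st.2 • v := by
    intro st
    simp [hφ, LinearMap.add_apply, LinearMap.smulRight_apply]
  have hrange : LinearMap.range J = LinearMap.range φ := by
    apply le_antisymm
    · rintro _ ⟨x, rfl⟩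
      refine ⟨(-(B v x), B u x), ?_⟩
      rw [hφapp, hJapp, neg_smul]
      abel
    · rintro _ ⟨st, rfl⟩
      refine ⟨st.1 • p + st.2 • q, ?_⟩
      rw [map_add, map_smul, map_smul, hJp, hJq, hφapp]
  have hφinj : Function.Injective φ := by
    rw [← LinearMap.ker_eq_bot]
    apply (Submodule.eq_bot_iff _).mpr
    rintro ⟨s, t⟩ hst
    rw [LinearMap.mem_ker, hφapp] at hst
    have e1 : B (s • u + t • v) q = 0 := by rw [hst]; simp
    have e2 : B (s • u + t • v) p = 0 := by rw [hst]; simp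
    simp only [map_add, map_smul, LinearMap.add_apply, LinearMap.smul_apply, smul_eq_mul]
      at e1 e2
    rw [huq, hvq] at e1
    rw [hup, hvp] at e2
    have hs : s = 0 := by linear_combination e1
    have ht : t = 0 := by linear_combination -e2
    simp [hs, ht]
  have hrankJ : Module.finrank K (LinearMap.range J) = 2 := by
    rw [hrange, LinearMap.finrank_range_of_inj hφinj]
    simp [Module.finrank_prod]
  set χ : K × K →ₗ[K] V :=
    (LinearMap.fst K K K).smulRight p + (LinearMap.snd K K K).smulRight q with hχ
  have hχapp : ∀ st : K × K, χ st = st.1 • p + st.2 • q := by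
    intro st
    simp [hχ, LinearMap.add_apply, LinearMap.smulRight_apply]
  have hχinj : Function.Injective χ := by
    rw [← LinearMap.ker_eq_bot]
    apply (Submodule.eq_bot_iff _).mpr
    rintro ⟨s, t⟩ hst
    rw [LinearMap.mem_ker, hχapp] at hst
    have e1 : B u (s • p + t • q) = 0 := by rw [hst]; simp
    have e2 : B v (s • p + t • q) = 0 := by rw [hst]; simp
    simp only [map_add, map_smul, smul_eq_mul] at e1 e2
    rw [hup, huq] at e1
    rw [hvp, hvq] at e2
    have ht : t = 0 := by linear_combination e1
    have hs : s = 0 := by linear_combination -e2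
    simp [hs, ht]
  have hrankχ : Module.finrank K (LinearMap.range χ) = 2 := by
    rw [LinearMap.finrank_range_of_inj hχinj]
    simp [Module.finrank_prod]
  have hkersub : LinearMap.ker A ⊔ LinearMap.range χ ≤ LinearMap.ker (A - J) := by
    apply sup_le
    · intro x hx
      rw [LinearMap.mem_ker] at hx ⊢
      obtain ⟨k1, k2⟩ := hker x hx
      rw [LinearMap.sub_apply, hx, hJapp, k1, k2]
      simp
    · rintro _ ⟨st, rfl⟩
      rw [LinearMap.mem_ker, hχapp, LinearMap.sub_apply, map_add, map_smul, map_smul,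
        map_add, map_smul, map_smul, hJp, hJq]
      rw [← hu, ← hv]
      abel
  have hinf : LinearMap.ker A ⊓ LinearMap.range χ = ⊥ := by
    apply (Submodule.eq_bot_iff _).mpr
    rintro x ⟨hxk, ⟨st, rfl⟩⟩
    obtain ⟨e1, e2⟩ := hker _ (LinearMap.mem_ker.mp hxk)
    rw [hχapp] at e1 e2 ⊢
    simp only [map_add, map_smul, smul_eq_mul] at e1 e2
    rw [hup, huq] at e1
    rw [hvp, hvq] at e2
    have h1 : st.2 = 0 := by linear_combination e1
    have h2 : st.1 = 0 := by linear_combination -e2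
    rw [h1, h2]
    simp
  have hkerge : Module.finrank K (LinearMap.ker A) + 2
      ≤ Module.finrank K (LinearMap.ker (A - J)) := by
    have hse := Submodule.finrank_sup_add_finrank_inf_eq (LinearMap.ker A) (LinearMap.range χ)
    rw [hinf, finrank_bot] at hse
    have hm := Submodule.finrank_mono hkersub
    omega
  have hrangele : Module.finrank K (LinearMap.range A)
      ≤ Module.finrank K (LinearMap.range (A - J)) + 2 := by
    have hsub : LinearMap.range A ≤ LinearMap.range (A - J) ⊔ LinearMap.range J := by
      rintro _ ⟨x, rfl⟩
      have hx : A x = (A - J) x + J x := by rw [LinearMap.sub_apply]; abel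
      rw [hx]
      exact Submodule.add_mem_sup (LinearMap.mem_range_self _ x) (LinearMap.mem_range_self _ x)
    have hm := Submodule.finrank_mono hsub
    have hse := Submodule.finrank_sup_add_finrank_inf_eq (LinearMap.range (A - J))
      (LinearMap.range J)
    omega
  have rn1 := LinearMap.finrank_range_add_finrank_ker (A - J)
  have rn2 := LinearMap.finrank_range_add_finrank_ker A
  exact ⟨J, hskew, hrankJ, hJJ, by omega⟩
end

section
/- Let J₁, J₂ ∈ o_n(K) with J₁² = J₂² = 0 and rank J_i ≤ 2. Then there exists λ ∈ K such that (J₁ + J₂)³ = λ(J₁ + J₂). -/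
open Module

section
variable {K V : Type*} [Field K] [CharZero K] [AddCommGroup V] [Module K V]
  [FiniteDimensional K V]

omit [FiniteDimensional K V] in
lemma altB (B : LinearMap.BilinForm K V) (hsymm : ∀ x y, B x y = B y x)
    (X : Module.End K V) (hX : ∀ x y, B (X x) y = - B x (X y)) (v : V) :
    B (X v) v = 0 := by
  have h := hX v v
  have h2 := hsymm v (X v)
  rw [h2] at h
  have : B (X v) v + B (X v) v = 0 := by linear_combination h
  exact add_self_eq_zero.mp this

lemma lemA (B : LinearMap.BilinForm K V) (hB : B.Nondegenerate)
    (hsymm : ∀ x y, B x y = B y x)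
    (J : Module.End K V) (hJ : ∀ x y, B (J x) y = - B x (J y))
    (hr : Module.finrank K (LinearMap.range J) ≤ 2) :
    ∃ z y : V, ∀ x, J x = B (J x) y • J z - B (J x) z • J y := by
  by_cases hJ0 : J = 0
  · exact ⟨0, 0, by simp [hJ0]⟩
  · obtain ⟨z₀, hz₀⟩ : ∃ z, J z ≠ 0 := by
      by_contra h
      push_neg at h
      exact hJ0 (LinearMap.ext fun x => by simpa using h x)
    obtain ⟨y, hy⟩ : ∃ y, B (J z₀) y ≠ 0 := by
      by_contra h
      push_neg at h
      exact hz₀ (hB.1 _ h)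
    set c := B (J z₀) y with hc
    set z := c⁻¹ • z₀ with hzdef
    have hzy : B (J z) y = 1 := by
      simp [hzdef, map_smul]
      field_simp
      exact hc.symm
    have hyz : B (J y) z = -1 := by
      rw [hJ y z, hsymm, hzy]
    have halt := altB B hsymm J hJ
    refine ⟨z, y, fun x => ?_⟩
    have hli : LinearIndependent K ![J z, J y] := by
      rw [LinearIndependent.pair_iff]
      intro s t hst
      have h1 : B (s • J z + t • J y) y = 0 := by rw [hst]; simp
      have h2 : B (s • J z + t • J y) z = 0 := by rw [hst]; simp
      simp only [map_add, map_smul, LinearMap.add_apply, LinearMap.smul_apply,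
        smul_eq_mul, hzy, hyz, halt] at h1 h2
      constructor
      · linear_combination h1
      · linear_combination -h2
    have hrange : Set.range ![J z, J y] = {J z, J y} := by
      ext v
      simp [Fin.exists_fin_two, or_comm]
    have hspan : Submodule.span K ({J z, J y} : Set V) = LinearMap.range J := by
      apply Submodule.eq_of_le_of_finrank_le
      · rw [Submodule.span_le]
        rintro v (rfl | rfl)
        · exact LinearMap.mem_range_self J z
        · exact LinearMap.mem_range_self J y
      · rw [← hrange, finrank_span_eq_card hli]
        simpa using hr
    have hNmem : J x - B (J x) y • J z + B (J x) z • J y ∈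
        Submodule.span K ({J z, J y} : Set V) := by
      rw [hspan]
      apply Submodule.add_mem
      apply Submodule.sub_mem
      · exact LinearMap.mem_range_self J x
      · exact Submodule.smul_mem _ _ (LinearMap.mem_range_self J z)
      · exact Submodule.smul_mem _ _ (LinearMap.mem_range_self J y)
    rw [Submodule.mem_span_pair] at hNmem
    obtain ⟨s, t, hst⟩ := hNmem
    have h1 : B (s • J z + t • J y) y = 0 := by
      rw [hst]
      simp only [map_add, map_sub, map_smul, LinearMap.add_apply, LinearMap.sub_apply,
        LinearMap.smul_apply, smul_eq_mul, hzy, hyz, halt]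
      ring
    have h2 : B (s • J z + t • J y) z = 0 := by
      rw [hst]
      simp only [map_add, map_sub, map_smul, LinearMap.add_apply, LinearMap.sub_apply,
        LinearMap.smul_apply, smul_eq_mul, hzy, hyz, halt]
      ring
    simp only [map_add, map_smul, LinearMap.add_apply, LinearMap.smul_apply,
      smul_eq_mul, hzy, hyz, halt] at h1 h2
    have hs : s = 0 := by linear_combination h1
    have ht : t = 0 := by linear_combination -h2
    rw [hs, ht] at hst
    simp only [zero_smul, add_zero] at hst
    have : J x - B (J x) y • J z + B (J x) z • J y = 0 := hst.symm
    linear_combination (norm := abel) this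

omit [FiniteDimensional K V] in
lemma lemB (B : LinearMap.BilinForm K V) (hsymm : ∀ x y, B x y = B y x)
    (J X : Module.End K V) (hJ : ∀ x y, B (J x) y = - B x (J y))
    (hX : ∀ x y, B (X x) y = - B x (X y))
    (z y : V) (hf : ∀ x, J x = B (J x) y • J z - B (J x) z • J y) :
    J * X * J = (-(B (X (J z)) (J y))) • J := by
  have haltX := altB B hsymm X hX
  ext x
  have hXJ : X (J x) = B (J x) y • X (J z) - B (J x) z • X (J y) := by
    conv_lhs => rw [hf x]
    simp
  have e1 : B (X (J x)) (J y) = B (J x) y * B (X (J z)) (J y) := by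
    rw [hXJ]
    simp only [map_sub, map_smul, LinearMap.sub_apply, LinearMap.smul_apply,
      smul_eq_mul, haltX]
    ring
  have e2 : B (X (J x)) (J z) = B (J x) z * B (X (J z)) (J y) := by
    rw [hXJ]
    have hsw : B (X (J y)) (J z) = - B (X (J z)) (J y) := by
      rw [hX (J y) (J z), hsymm]
    simp only [map_sub, map_smul, LinearMap.sub_apply, LinearMap.smul_apply,
      smul_eq_mul, haltX, hsw]
    ring
  show J (X (J x)) = (-(B (X (J z)) (J y))) • J x
  conv_lhs => rw [hf (X (J x))]
  rw [hJ (X (J x)) y, hJ (X (J x)) z, e1, e2]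
  conv_rhs => rw [hf x]
  module
end

/-- For J₁, J₂ in the (closure of the) minimal orbit of o_n, the cube of J₁ + J₂
is a scalar multiple of J₁ + J₂. -/
theorem stmt14 {K V : Type*} [Field K] [IsAlgClosed K] [CharZero K]
    [AddCommGroup V] [Module K V] [FiniteDimensional K V]
    (B : LinearMap.BilinForm K V) (hB : B.Nondegenerate)
    (hsymm : ∀ x y, B x y = B y x)
    (J₁ J₂ : Module.End K V)
    (h₁ : ∀ x y, B (J₁ x) y = - B x (J₁ y))
    (h₂ : ∀ x y, B (J₂ x) y = - B x (J₂ y))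
    (hsq₁ : J₁ ^ 2 = 0) (hsq₂ : J₂ ^ 2 = 0)
    (hr₁ : Module.finrank K (LinearMap.range J₁) ≤ 2)
    (hr₂ : Module.finrank K (LinearMap.range J₂) ≤ 2) :
    ∃ lam : K, (J₁ + J₂) ^ 3 = lam • (J₁ + J₂) := by
  obtain ⟨z₁, y₁, hf₁⟩ := lemA B hB hsymm J₁ h₁ hr₁
  obtain ⟨z₂, y₂, hf₂⟩ := lemA B hB hsymm J₂ h₂ hr₂
  set c₁ := -(B (J₂ (J₁ z₁)) (J₁ y₁)) with hc₁
  set c₂ := -(B (J₁ (J₂ z₂)) (J₂ y₂)) with hc₂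
  have hC₁ : J₁ * J₂ * J₁ = c₁ • J₁ := lemB B hsymm J₁ J₂ h₁ h₂ z₁ y₁ hf₁
  have hC₂ : J₂ * J₁ * J₂ = c₂ • J₂ := lemB B hsymm J₂ J₁ h₂ h₁ z₂ y₂ hf₂
  have m1 : J₁ * J₁ = 0 := by rw [← pow_two]; exact hsq₁
  have m2 : J₂ * J₂ = 0 := by rw [← pow_two]; exact hsq₂
  have expand : (J₁ + J₂) ^ 3 = J₁ * J₂ * J₁ + J₂ * J₁ * J₂ := by
    have : (J₁ + J₂) ^ 3 = J₁*J₁*J₁ + J₁*J₁*J₂ + J₁*J₂*J₁ + J₁*J₂*J₂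
        + (J₂*J₁*J₁ + J₂*J₁*J₂ + J₂*J₂*J₁ + J₂*J₂*J₂) := by noncomm_ring
    rw [this, m1, m2]
    simp only [zero_mul, mul_zero, zero_add, add_zero]
    rw [mul_assoc J₁ J₂ J₂, m2, mul_zero, add_zero,
      mul_assoc J₂ J₁ J₁]
    rw [m1, mul_zero, zero_add]
  by_cases h0 : J₂ * J₁ = 0
  · refine ⟨0, ?_⟩
    rw [expand, zero_smul]
    have a1 : J₁ * J₂ * J₁ = 0 := by rw [mul_assoc, h0, mul_zero]
    have a2 : J₂ * J₁ * J₂ = 0 := by rw [h0, zero_mul]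
    rw [a1, a2, add_zero]
  · refine ⟨c₁, ?_⟩
    have key : c₁ • (J₂ * J₁) = c₂ • (J₂ * J₁) := by
      calc c₁ • (J₂ * J₁) = J₂ * (c₁ • J₁) := by rw [mul_smul_comm]
        _ = J₂ * (J₁ * J₂ * J₁) := by rw [hC₁]
        _ = (J₂ * J₁ * J₂) * J₁ := by simp only [mul_assoc]
        _ = (c₂ • J₂) * J₁ := by rw [hC₂]
        _ = c₂ • (J₂ * J₁) := by rw [smul_mul_assoc]
    have hcc : c₁ = c₂ := by
      have := sub_eq_zero.mpr key
      rw [← sub_smul] at this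
      rcases smul_eq_zero.mp this with h | h
      · exact sub_eq_zero.mp h
      · exact absurd h h0
    rw [expand, hC₁, hcc, hC₂, ← smul_add]
end

section
/- If A ∈ o_n(K) is a sum of two elements J₁, J₂ with J_i² = 0 and rank J_i = 2, and rank(A) = 4, then rank(A²) is even. -/
open Module LinearMap

/-- If `B` is nondegenerate and `g` is a `B`-adjoint of `f`, then `f` and `g` have equal rank. -/
lemma rank_eq_of_adjoint {K V : Type*} [Field K]
    [AddCommGroup V] [Module K V] [FiniteDimensional K V]
    (B : LinearMap.BilinForm K V) (hB : B.Nondegenerate)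
    (f g : Module.End K V) (h : ∀ x y, B (f x) y = B x (g y)) :
    Module.finrank K (LinearMap.range f) = Module.finrank K (LinearMap.range g) := by
  set e := B.toDual hB with he
  have key : (e : V →ₗ[K] Module.Dual K V) ∘ₗ f = g.dualMap ∘ₗ (e : V →ₗ[K] Module.Dual K V) := by
    ext x y
    simpa [he, LinearMap.BilinForm.toDual_def] using h x y
  have hf : f = (e.symm : Module.Dual K V →ₗ[K] V) ∘ₗ g.dualMap ∘ₗ (e : V →ₗ[K] Module.Dual K V) := by
    rw [← key]
    ext x
    simp
  rw [hf]
  rw [LinearMap.range_comp, LinearMap.range_comp, LinearEquiv.range, Submodule.map_top,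
    LinearEquiv.finrank_map_eq]
  exact LinearMap.finrank_range_dualMap_eq_finrank_range g

/-- If A ∈ 2C has rank 4 then rank(A²) is even. -/
theorem stmt15 {K V : Type*} [Field K] [IsAlgClosed K] [CharZero K]
    [AddCommGroup V] [Module K V] [FiniteDimensional K V]
    (B : LinearMap.BilinForm K V) (hB : B.Nondegenerate)
    (hsymm : ∀ x y, B x y = B y x)
    (J₁ J₂ A : Module.End K V)
    (h₁ : ∀ x y, B (J₁ x) y = - B x (J₁ y))
    (h₂ : ∀ x y, B (J₂ x) y = - B x (J₂ y))
    (hsq₁ : J₁ ^ 2 = 0) (hsq₂ : J₂ ^ 2 = 0)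
    (hr₁ : Module.finrank K (LinearMap.range J₁) = 2)
    (hr₂ : Module.finrank K (LinearMap.range J₂) = 2)
    (hA : A = J₁ + J₂)
    (hrkA : Module.finrank K (LinearMap.range A) = 4) :
    Even (Module.finrank K (LinearMap.range (A ^ 2))) := by
  have hm₁ : J₁ * J₁ = 0 := by rw [← sq]; exact hsq₁
  have hm₂ : J₂ * J₂ = 0 := by rw [← sq]; exact hsq₂
  set P : Module.End K V := J₁ * J₂ with hP
  set Q : Module.End K V := J₂ * J₁ with hQ
  have hA2 : A ^ 2 = P + Q := by
    rw [sq, hA, add_mul, mul_add, mul_add, hm₁, hm₂, hP, hQ]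
    abel
  -- adjointness: B (Q x) y = B x (P y)
  have hadj : ∀ x y, B (Q x) y = B x (P y) := by
    intro x y
    have : B (J₂ (J₁ x)) y = - B (J₁ x) (J₂ y) := h₂ (J₁ x) y
    rw [show Q x = J₂ (J₁ x) from rfl, this, h₁ x (J₂ y), neg_neg]
    rfl
  have hrPQ : Module.finrank K (LinearMap.range Q) = Module.finrank K (LinearMap.range P) :=
    rank_eq_of_adjoint B hB Q P hadj
  -- range A ≤ range J₁ ⊔ range J₂
  have hle : LinearMap.range A ≤ LinearMap.range J₁ ⊔ LinearMap.range J₂ := by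
    rintro _ ⟨x, rfl⟩
    rw [hA]
    exact Submodule.add_mem_sup (LinearMap.mem_range_self J₁ x) (LinearMap.mem_range_self J₂ x)
  have hsupinf := Submodule.finrank_sup_add_finrank_inf_eq (LinearMap.range J₁) (LinearMap.range J₂)
  rw [hr₁, hr₂] at hsupinf
  have hmono : 4 ≤ Module.finrank K ↥(LinearMap.range J₁ ⊔ LinearMap.range J₂) := by
    rw [← hrkA]; exact Submodule.finrank_mono hle
  have hinf0 : Module.finrank K ↥(LinearMap.range J₁ ⊓ LinearMap.range J₂) = 0 := by omega
  have hinfbot : LinearMap.range J₁ ⊓ LinearMap.range J₂ = ⊥ :=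
    Submodule.finrank_eq_zero.mp hinf0
  have hsup4 : Module.finrank K ↥(LinearMap.range J₁ ⊔ LinearMap.range J₂) = 4 := by omega
  have hrange_eq : LinearMap.range A = LinearMap.range J₁ ⊔ LinearMap.range J₂ :=
    Submodule.eq_of_le_of_finrank_le hle (by rw [hsup4, hrkA])
  -- range A² = range P ⊔ range Q
  have hrange2 : LinearMap.range (A ^ 2) = LinearMap.range P ⊔ LinearMap.range Q := by
    apply le_antisymm
    · rintro _ ⟨x, rfl⟩
      rw [hA2]
      exact Submodule.add_mem_sup (LinearMap.mem_range_self P x) (LinearMap.mem_range_self Q x)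
    · rw [sup_le_iff]
      constructor
      · rintro _ ⟨u, rfl⟩
        have : J₂ u ∈ LinearMap.range A := by
          rw [hrange_eq]; exact Submodule.mem_sup_right (LinearMap.mem_range_self J₂ u)
        obtain ⟨v, hv⟩ := this
        refine ⟨v, ?_⟩
        have : (A ^ 2) v = A (A v) := by rw [sq]; rfl
        rw [this, hv, hA]
        show J₁ (J₂ u) + J₂ (J₂ u) = P u
        have : J₂ (J₂ u) = 0 := by
          have := congrArg (fun f => f u) hm₂; simpa using this
        rw [this, add_zero]; rfl
      · rintro _ ⟨u, rfl⟩
        have : J₁ u ∈ LinearMap.range A := by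
          rw [hrange_eq]; exact Submodule.mem_sup_left (LinearMap.mem_range_self J₁ u)
        obtain ⟨v, hv⟩ := this
        refine ⟨v, ?_⟩
        have : (A ^ 2) v = A (A v) := by rw [sq]; rfl
        rw [this, hv, hA]
        show J₁ (J₁ u) + J₂ (J₁ u) = Q u
        have : J₁ (J₁ u) = 0 := by
          have := congrArg (fun f => f u) hm₁; simpa using this
        rw [this, zero_add]; rfl
  have hPle : LinearMap.range P ≤ LinearMap.range J₁ := by
    rintro _ ⟨u, rfl⟩; exact LinearMap.mem_range_self J₁ (J₂ u)
  have hQle : LinearMap.range Q ≤ LinearMap.range J₂ := by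
    rintro _ ⟨u, rfl⟩; exact LinearMap.mem_range_self J₂ (J₁ u)
  have hPQbot : LinearMap.range P ⊓ LinearMap.range Q = ⊥ := by
    rw [← le_bot_iff, ← hinfbot]
    exact inf_le_inf hPle hQle
  have hfin := Submodule.finrank_sup_add_finrank_inf_eq (LinearMap.range P) (LinearMap.range Q)
  rw [hPQbot, finrank_bot, add_zero] at hfin
  rw [hrange2, hfin, hrPQ]
  exact ⟨Module.finrank K (LinearMap.range P), by ring⟩
end
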